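/- arXiv:1505.02718 — 10 statements merged into one kernel-verified Lean document; each statement's English description precedes it below -/
import Mathlib

section
/- Let H be a real Hilbert space, I = {1,...,n} a finite index set, and for each i ∈ I let λ_i > 0 with Σ_{i∈I} λ_i = 1 and let T_i : H → H be firmly nonexpansive. Set T = Σ_{i∈I} λ_i T_i. If x and y are points in H such that ‖Tx − Ty‖² = ⟪x − y, Tx − Ty⟫, then T_i x − T_i y = Tx − Ty for every i ∈ I. Consequently, if there exists i₀ ∈ I such that T_{i₀} is injective, then T is injective. -/
/-!
Firm nonexpansiveness of `Tᵢ` says `‖vᵢ‖² ≤ ⟪x - y, vᵢ⟫` for `vᵢ = Tᵢ x - Tᵢ y`. By the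
variance identity `∑ λᵢ ‖vᵢ - v‖² = ∑ λᵢ ‖vᵢ‖² - ‖v‖²` for the mean `v = ∑ λᵢ vᵢ = Tx - Ty`,
equality `‖v‖² = ⟪x - y, v⟫` forces every `vᵢ = v`. If `Tx = Ty`, equality holds trivially,
so `T_{i₀} x = T_{i₀} y`.
-/

open RealInnerProductSpace

variable {H : Type*} [NormedAddCommGroup H] [InnerProductSpace ℝ H] [CompleteSpace H]

def FirmlyNonexpansive (T : H → H) : Prop :=
  ∀ x y : H, ‖T x - T y‖ ^ 2 + ‖(x - T x) - (y - T y)‖ ^ 2 ≤ ‖x - y‖ ^ 2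

section

variable {E ι : Type*} [NormedAddCommGroup E] [InnerProductSpace ℝ E]

theorem FirmlyNonexpansive.norm_sq_le_inner {T : E → E} (hT : FirmlyNonexpansive T) (x y : E) :
    ‖T x - T y‖ ^ 2 ≤ ⟪x - y, T x - T y⟫ := by
  have h := hT x y
  rw [show (x - T x) - (y - T y) = (x - y) - (T x - T y) by abel,
    norm_sub_sq_real (x - y)] at h
  linarith

theorem sum_mul_norm_sub_barycenter_sq {s : Finset ι} {w : ι → ℝ} (hw : ∑ i ∈ s, w i = 1)
    (v : ι → E) :
    ∑ i ∈ s, w i * ‖v i - ∑ j ∈ s, w j • v j‖ ^ 2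
      = ∑ i ∈ s, w i * ‖v i‖ ^ 2 - ‖∑ j ∈ s, w j • v j‖ ^ 2 := by
  set u := ∑ j ∈ s, w j • v j
  have hu : ∑ i ∈ s, w i * ⟪v i, u⟫ = ‖u‖ ^ 2 := by
    rw [← real_inner_self_eq_norm_sq, sum_inner]
    simp only [u, real_inner_smul_left]
  calc ∑ i ∈ s, w i * ‖v i - u‖ ^ 2
      = ∑ i ∈ s, w i * ‖v i‖ ^ 2 - 2 * ∑ i ∈ s, w i * ⟪v i, u⟫ + (∑ i ∈ s, w i) * ‖u‖ ^ 2 := by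
        simp only [norm_sub_sq_real, Finset.mul_sum, Finset.sum_mul, ← Finset.sum_sub_distrib,
          ← Finset.sum_add_distrib]
        exact Finset.sum_congr rfl fun i _ => by ring
    _ = ∑ i ∈ s, w i * ‖v i‖ ^ 2 - ‖u‖ ^ 2 := by rw [hu, hw]; ring

theorem eq_sum_smul_of_norm_sq_le_inner {s : Finset ι} {w : ι → ℝ} (hpos : ∀ i ∈ s, 0 < w i)
    (hw : ∑ i ∈ s, w i = 1) {v : ι → E} {d : E} (hv : ∀ i ∈ s, ‖v i‖ ^ 2 ≤ ⟪d, v i⟫)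
    (heq : ‖∑ j ∈ s, w j • v j‖ ^ 2 = ⟪d, ∑ j ∈ s, w j • v j⟫) :
    ∀ i ∈ s, v i = ∑ j ∈ s, w j • v j := by
  set u := ∑ j ∈ s, w j • v j
  have hterm_nonneg : ∀ i ∈ s, 0 ≤ w i * ‖v i - u‖ ^ 2 :=
    fun i hi => mul_nonneg (hpos i hi).le (sq_nonneg _)
  have hsum_nonpos : ∑ i ∈ s, w i * ‖v i - u‖ ^ 2 ≤ 0 := by
    have hdu : ⟪d, u⟫ = ∑ i ∈ s, w i * ⟪d, v i⟫ := by
      simp only [u, inner_sum, real_inner_smul_right]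
    have hle : ∑ i ∈ s, w i * ‖v i‖ ^ 2 ≤ ∑ i ∈ s, w i * ⟪d, v i⟫ :=
      Finset.sum_le_sum fun i hi => mul_le_mul_of_nonneg_left (hv i hi) (hpos i hi).le
    rw [sum_mul_norm_sub_barycenter_sq hw, heq, hdu]
    linarith
  intro i hi
  have hzero := (Finset.sum_eq_zero_iff_of_nonneg hterm_nonneg).mp
    (le_antisymm hsum_nonpos (Finset.sum_nonneg hterm_nonneg)) i hi
  rw [mul_eq_zero, or_iff_right (hpos i hi).ne', sq_eq_zero_iff, norm_eq_zero] at hzero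
  exact sub_eq_zero.mp hzero

end

theorem stmt0_general {n : ℕ} (lam : Fin n → ℝ) (hpos : ∀ i, 0 < lam i)
    (hsum : ∑ i, lam i = 1) (T : Fin n → H → H) (hT : ∀ i, FirmlyNonexpansive (T i)) :
    (∀ x y : H,
      ‖(∑ i, lam i • T i x) - (∑ i, lam i • T i y)‖ ^ 2
          = ⟪x - y, (∑ i, lam i • T i x) - (∑ i, lam i • T i y)⟫ →
        ∀ i, T i x - T i y = (∑ i, lam i • T i x) - (∑ i, lam i • T i y)) ∧
    ((∃ i₀, Function.Injective (T i₀)) →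
      Function.Injective (fun x => ∑ i, lam i • T i x)) := by
  have hdiff : ∀ x y : H, (∑ i, lam i • T i x) - (∑ i, lam i • T i y)
      = ∑ i, lam i • (T i x - T i y) := fun x y => by
    simp only [smul_sub, Finset.sum_sub_distrib]
  have key : ∀ x y : H,
      ‖(∑ i, lam i • T i x) - (∑ i, lam i • T i y)‖ ^ 2
          = ⟪x - y, (∑ i, lam i • T i x) - (∑ i, lam i • T i y)⟫ →
        ∀ i, T i x - T i y = (∑ i, lam i • T i x) - (∑ i, lam i • T i y) := by
    intro x y h i
    rw [hdiff] at h ⊢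
    exact eq_sum_smul_of_norm_sq_le_inner (fun i _ => hpos i) hsum
      (fun i _ => (hT i).norm_sq_le_inner x y) h i (Finset.mem_univ i)
  refine ⟨key, ?_⟩
  rintro ⟨i₀, hinj⟩ x y hxy
  have hzero : (∑ i, lam i • T i x) - (∑ i, lam i • T i y) = 0 := sub_eq_zero.mpr hxy
  have hi₀ := key x y (by rw [hzero]; simp) i₀
  rw [hzero] at hi₀
  exact hinj (sub_eq_zero.mp hi₀)

/-- A convex combination `T = Σ λᵢ Tᵢ` of firmly nonexpansive maps: whenever
`‖Tx − Ty‖² = ⟪x − y, Tx − Ty⟫`, each `Tᵢx − Tᵢy = Tx − Ty`; consequently, if some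
`T_{i₀}` is injective then `T` is injective. -/
theorem stmt0 {n : ℕ} (hn : 0 < n) (lam : Fin n → ℝ) (hpos : ∀ i, 0 < lam i)
    (hsum : ∑ i, lam i = 1) (T : Fin n → H → H) (hT : ∀ i, FirmlyNonexpansive (T i)) :
    (∀ x y : H,
      ‖(∑ i, lam i • T i x) - (∑ i, lam i • T i y)‖ ^ 2
          = ⟪x - y, (∑ i, lam i • T i x) - (∑ i, lam i • T i y)⟫ →
        ∀ i, T i x - T i y = (∑ i, lam i • T i x) - (∑ i, lam i • T i y)) ∧
    ((∃ i₀, Function.Injective (T i₀)) →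
      Function.Injective (fun x => ∑ i, lam i • T i x)) :=
  stmt0_general lam hpos hsum T hT
end

section
/- Let H be a real Hilbert space, I = {1,...,n}, μ > 0, and for each i ∈ I let λ_i > 0 with Σ_{i∈I} λ_i = 1 and let A_i : H ⇉ H be an arbitrary set-valued mapping. Then the inverse of the resolvent average satisfies (R_μ(A, λ))⁻¹ = R_{μ⁻¹}(A⁻¹, λ), where A⁻¹ = (A₁⁻¹, ..., A_n⁻¹). -/
open RealInnerProductSpace

namespace SVP

variable {H : Type*} [NormedAddCommGroup H] [InnerProductSpace ℝ H]

/-- Inverse of a set-valued mapping: `x ∈ inv A u ↔ u ∈ A x`. -/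
def inv (A : H → Set H) : H → Set H := fun u => {x | u ∈ A x}

/-- Pointwise (Minkowski) sum of two set-valued mappings. -/
def add (A B : H → Set H) : H → Set H := fun x => {w | ∃ u ∈ A x, ∃ v ∈ B x, w = u + v}

/-- Pointwise difference of two set-valued mappings. -/
def sub (A B : H → Set H) : H → Set H := fun x => {w | ∃ u ∈ A x, ∃ v ∈ B x, w = u - v}

/-- Pointwise scalar multiple of a set-valued mapping. -/
def smul (c : ℝ) (A : H → Set H) : H → Set H := fun x => (fun u => c • u) '' A x

/-- The identity as a set-valued mapping. -/
def id' : H → Set H := fun x => {x}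

/-- Composition of set-valued mappings: `(comp A B) x = ⋃ y ∈ B x, A y`. -/
def comp (A B : H → Set H) : H → Set H := fun x => ⋃ y ∈ B x, A y

/-- Weighted pointwise (Minkowski) combination `Σ_i lam i • (B i)`. -/
def lcomb {n : ℕ} (lam : Fin n → ℝ) (B : Fin n → H → Set H) : H → Set H :=
  fun x => {u | ∃ v : Fin n → H, (∀ i, v i ∈ B i x) ∧ u = ∑ i, lam i • v i}

/-- The `λ`-weighted resolvent average with parameter `μ`:
`R_μ(A, λ) = (Σ_i λ_i (A_i + μ⁻¹ Id)⁻¹)⁻¹ − μ⁻¹ Id`. -/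
def resAvg {n : ℕ} (μ : ℝ) (lam : Fin n → ℝ) (A : Fin n → H → Set H) : H → Set H :=
  sub (inv (lcomb lam (fun i => inv (add (A i) (smul μ⁻¹ id'))))) (smul μ⁻¹ id')

/-- Monotonicity of a set-valued mapping. -/
def IsMonotone (A : H → Set H) : Prop :=
  ∀ ⦃x y u v : H⦄, u ∈ A x → v ∈ A y → 0 ≤ ⟪x - y, u - v⟫

/-- Maximal monotonicity: the graph is not properly contained in the graph of
another monotone mapping. -/
def IsMaxMonotone (A : H → Set H) : Prop :=
  IsMonotone A ∧ ∀ B : H → Set H, IsMonotone B → (∀ x, A x ⊆ B x) → ∀ x, B x ⊆ A x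

/-- Domain of a set-valued mapping. -/
def dom (A : H → Set H) : Set H := {x | (A x).Nonempty}

/-- Range of a set-valued mapping. -/
def ran (A : H → Set H) : Set H := {u | ∃ x, u ∈ A x}

/-- Graph of a set-valued mapping. -/
def graph (A : H → Set H) : Set (H × H) := {p | p.2 ∈ A p.1}

end SVP

variable {H : Type*} [NormedAddCommGroup H] [InnerProductSpace ℝ H] [CompleteSpace H]

/-! Unfolding the definitions, `w ∈ R_μ(A, λ) x` means: there are `a_i ∈ A_i v_i` with
`a_i + μ⁻¹ v_i = w + μ⁻¹ x` for every `i` and `x = Σ λ_i v_i`. Averaging the first identity with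
weights `λ_i` gives `w = Σ λ_i a_i`, and multiplying it by `μ` gives `v_i + μ a_i = x + μ w`, so
`(a, v, μ⁻¹)` witnesses `x ∈ R_{μ⁻¹}(A⁻¹, λ) w`. Since `μ ↦ μ⁻¹` and `A ↦ A⁻¹` are involutions,
this one implication gives the equality. -/

lemma add_inv_smul_eq_iff {𝕜 E : Type*} [Field 𝕜] [AddCommGroup E] [Module 𝕜 E] {μ : 𝕜}
    (hμ : μ ≠ 0) {a v w x : E} : a + μ⁻¹ • v = w + μ⁻¹ • x ↔ v + μ • a = x + μ • w := by
  rw [← (smul_right_injective E hμ).eq_iff]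
  simp only [smul_add, smul_inv_smul₀ hμ, add_comm]

lemma eq_sum_smul_of_add_smul_eq {ι R E : Type*} [Fintype ι] [CommRing R] [AddCommGroup E]
    [Module R E] {lam : ι → R} (hsum : ∑ i, lam i = 1) {c : R} {a v : ι → E} {w x : E}
    (h : ∀ i, a i + c • v i = w + c • x) (hx : x = ∑ i, lam i • v i) :
    w = ∑ i, lam i • a i := by
  have ha : ∀ i, a i = w + c • x - c • v i := fun i => eq_sub_of_add_eq (h i)
  calc w = (∑ i, lam i) • (w + c • x) - c • ∑ i, lam i • v i := by
        rw [hsum, one_smul, ← hx, add_sub_cancel_right]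
    _ = ∑ i, lam i • a i := by
        simp only [ha, smul_sub, Finset.sum_sub_distrib, Finset.sum_smul, Finset.smul_sum,
          smul_comm c]

namespace SVP

variable {E : Type*} [NormedAddCommGroup E] [InnerProductSpace ℝ E]

lemma mem_resAvg_iff {n : ℕ} {μ : ℝ} {lam : Fin n → ℝ} {A : Fin n → E → Set E} {x w : E} :
    w ∈ resAvg μ lam A x ↔ ∃ v a : Fin n → E, (∀ i, a i ∈ A i (v i)) ∧
      (∀ i, a i + μ⁻¹ • v i = w + μ⁻¹ • x) ∧ x = ∑ i, lam i • v i := by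
  simp only [resAvg, sub, inv, lcomb, add, smul, id', Set.mem_ofPred_eq, Set.image_singleton,
    Set.mem_singleton_iff, exists_eq_left]
  constructor
  · rintro ⟨u, ⟨v, hv, hx⟩, rfl⟩
    choose a ha hu using hv
    exact ⟨v, a, ha, fun i => by rw [sub_add_cancel, hu i], hx⟩
  · rintro ⟨v, a, hA, hva, hx⟩
    exact ⟨w + μ⁻¹ • x, ⟨v, fun i => ⟨a i, hA i, (hva i).symm⟩, hx⟩, by abel⟩

lemma mem_resAvg_inv_of_mem {n : ℕ} {μ : ℝ} (hμ : μ ≠ 0) {lam : Fin n → ℝ}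
    (hsum : ∑ i, lam i = 1) {A : Fin n → E → Set E} {x w : E} (h : w ∈ resAvg μ lam A x) :
    x ∈ resAvg μ⁻¹ lam (fun i => inv (A i)) w := by
  obtain ⟨v, a, hA, hva, hx⟩ := mem_resAvg_iff.1 h
  refine mem_resAvg_iff.2 ⟨a, v, hA, fun i => ?_, eq_sum_smul_of_add_smul_eq hsum hva hx⟩
  rw [inv_inv]
  exact (add_inv_smul_eq_iff hμ).1 (hva i)

end SVP

theorem stmt2_general {n : ℕ} {μ : ℝ} (hμ : 0 < μ) (lam : Fin n → ℝ)
    (hsum : ∑ i, lam i = 1) (A : Fin n → H → Set H) :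
    SVP.inv (SVP.resAvg μ lam A) = SVP.resAvg μ⁻¹ lam (fun i => SVP.inv (A i)) := by
  funext w
  ext x
  refine ⟨SVP.mem_resAvg_inv_of_mem hμ.ne' hsum, fun h => ?_⟩
  -- `inv` is an involution on set-valued mappings, definitionally
  have := SVP.mem_resAvg_inv_of_mem (inv_ne_zero hμ.ne') hsum h
  rwa [inv_inv] at this

/-- Inversion formula for the resolvent average:
`(R_μ(A, λ))⁻¹ = R_{μ⁻¹}(A⁻¹, λ)`. -/
theorem stmt2 {n : ℕ} (hn : 0 < n) {μ : ℝ} (hμ : 0 < μ) (lam : Fin n → ℝ)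
    (hpos : ∀ i, 0 < lam i) (hsum : ∑ i, lam i = 1) (A : Fin n → H → Set H) :
    SVP.inv (SVP.resAvg μ lam A) = SVP.resAvg μ⁻¹ lam (fun i => SVP.inv (A i)) :=
  stmt2_general hμ lam hsum A
end

section
/- Let H be a real Hilbert space, I = {1,...,n}, μ > 0, and for each i ∈ I let λ_i > 0 with Σ_{i∈I} λ_i = 1 and let A_i : H ⇉ H be maximally monotone. Then: (a) for every α > 0, R_μ(αA, λ) = α R_{αμ}(A, λ), where αA = (αA₁,...,αA_n); in particular R_μ(A, λ) = μ⁻¹ R₁(μA, λ); and (b) if A : H ⇉ H is maximally monotone and A_i = A for every i ∈ I, then R_μ(A, λ) = A. -/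
/-!
Unfolding the definition, `u ∈ R_μ(A, λ) x` iff `x = Σ λᵢ vᵢ` for some `vᵢ` with
`u + μ⁻¹ (x - vᵢ) ∈ Aᵢ vᵢ`. Multiplying this condition by `α⁻¹` gives (a). For (b), all the
`vᵢ` lie in the graph of the single-valued resolvent `(A + μ⁻¹ Id)⁻¹` at the same point, so they
coincide, and then `x = Σ λᵢ vᵢ = vᵢ`.
-/

open RealInnerProductSpace

variable {H : Type*} [NormedAddCommGroup H] [InnerProductSpace ℝ H] [CompleteSpace H]

namespace SVP

variable {H : Type*} [NormedAddCommGroup H] [InnerProductSpace ℝ H]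

theorem mem_smul_iff {c : ℝ} (hc : c ≠ 0) (A : H → Set H) (x u : H) :
    u ∈ smul c A x ↔ c⁻¹ • u ∈ A x :=
  Set.mem_smul_set_iff_inv_smul_mem₀ hc (A x) u

theorem smul_inv_smul {c : ℝ} (hc : c ≠ 0) (A : H → Set H) : smul c⁻¹ (smul c A) = A := by
  ext x u
  rw [mem_smul_iff (inv_ne_zero hc), mem_smul_iff hc, inv_inv, smul_smul, inv_mul_cancel₀ hc,
    one_smul]

theorem mem_resAvg {n : ℕ} (μ : ℝ) (lam : Fin n → ℝ) (A : Fin n → H → Set H) (x u : H) :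
    u ∈ resAvg μ lam A x ↔
      ∃ v : Fin n → H, (∀ i, u + μ⁻¹ • x - μ⁻¹ • v i ∈ A i (v i)) ∧ x = ∑ i, lam i • v i := by
  simp only [resAvg, sub, inv, lcomb, add, smul, id', Set.mem_ofPred_eq, Set.image_singleton,
    Set.mem_singleton_iff]
  constructor
  · rintro ⟨p, ⟨v, hv, hx⟩, q, rfl, rfl⟩
    refine ⟨v, fun i => ?_, hx⟩
    obtain ⟨a, ha, b, rfl, hp⟩ := hv i
    rwa [show p - μ⁻¹ • x + μ⁻¹ • x - μ⁻¹ • v i = a by rw [hp]; abel]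
  · rintro ⟨v, hv, hx⟩
    exact ⟨u + μ⁻¹ • x, ⟨v, fun i => ⟨_, hv i, _, rfl, by abel⟩, hx⟩, _, rfl, by abel⟩

theorem resAvg_smul {n : ℕ} {α : ℝ} (hα : α ≠ 0) (μ : ℝ) (lam : Fin n → ℝ)
    (A : Fin n → H → Set H) :
    resAvg μ lam (fun i => smul α (A i)) = smul α (resAvg (α * μ) lam A) := by
  have rescale : ∀ u x p : H, α⁻¹ • (u + μ⁻¹ • x - μ⁻¹ • p)
      = α⁻¹ • u + (α * μ)⁻¹ • x - (α * μ)⁻¹ • p := by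
    intro u x p
    rw [mul_inv]
    module
  ext x u
  simp only [mem_smul_iff hα, mem_resAvg, rescale]

theorem resAvg_eq_smul_inv_resAvg_one {n : ℕ} {μ : ℝ} (hμ : μ ≠ 0) (lam : Fin n → ℝ)
    (A : Fin n → H → Set H) :
    resAvg μ lam A = smul μ⁻¹ (resAvg 1 lam (fun i => smul μ (A i))) := by
  rw [resAvg_smul hμ, mul_one, smul_inv_smul hμ]

/-- The resolvent `(B + c Id)⁻¹` of a monotone `B` is single-valued. -/
theorem IsMonotone.eq_of_sub_smul_mem {B : H → Set H} (hB : IsMonotone B) {c : ℝ} (hc : 0 < c)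
    {y v w : H} (hv : y - c • v ∈ B v) (hw : y - c • w ∈ B w) : v = w := by
  have h := hB hv hw
  rw [show y - c • v - (y - c • w) = -c • (v - w) by module, real_inner_smul_right,
    real_inner_self_eq_norm_sq] at h
  have : ‖v - w‖ ^ 2 = 0 := le_antisymm (by nlinarith) (sq_nonneg _)
  simpa [sub_eq_zero] using this

theorem resAvg_const {n : ℕ} {μ : ℝ} (hμ : 0 < μ) {lam : Fin n → ℝ} (hsum : ∑ i, lam i = 1)
    {B : H → Set H} (hB : IsMonotone B) :
    resAvg μ lam (fun _ => B) = B := by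
  have combo_const : ∀ y : H, ∑ i, lam i • y = y := fun y => by
    rw [← Finset.sum_smul, hsum, one_smul]
  ext x u
  rw [mem_resAvg]
  constructor
  · rintro ⟨v, hv, hx⟩
    have hv_const : ∀ i j, v i = v j := fun i j =>
      hB.eq_of_sub_smul_mem (inv_pos.mpr hμ) (hv i) (hv j)
    have : Nonempty (Fin n) := by
      by_contra h
      simp [not_nonempty_iff.mp h] at hsum
    obtain ⟨j⟩ := this
    have hxj : x = v j := by
      rw [hx, ← combo_const (v j)]
      exact Finset.sum_congr rfl fun i _ => by rw [hv_const i j]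
    simpa [← hxj] using hv j
  · intro hu
    exact ⟨fun _ => x, fun _ => by simpa using hu, (combo_const x).symm⟩

end SVP

theorem stmt4_general {n : ℕ} {μ : ℝ} (hμ : 0 < μ) (lam : Fin n → ℝ)
    (hsum : ∑ i, lam i = 1) (A : Fin n → H → Set H) :
    (∀ α : ℝ, 0 < α →
      SVP.resAvg μ lam (fun i => SVP.smul α (A i))
        = SVP.smul α (SVP.resAvg (α * μ) lam A)) ∧
    SVP.resAvg μ lam A = SVP.smul μ⁻¹ (SVP.resAvg 1 lam (fun i => SVP.smul μ (A i))) ∧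
    (∀ B : H → Set H, SVP.IsMaxMonotone B → (∀ i, A i = B) →
      SVP.resAvg μ lam A = B) := by
  refine ⟨fun α hα => SVP.resAvg_smul hα.ne' μ lam A,
    SVP.resAvg_eq_smul_inv_resAvg_one hμ.ne' lam A, fun B hB hAB => ?_⟩
  rw [show A = fun _ => B from funext hAB]
  exact SVP.resAvg_const hμ hsum hB.1

/-- (a) `R_μ(αA, λ) = α R_{αμ}(A, λ)` for `α > 0`; in particular
`R_μ(A, λ) = μ⁻¹ R₁(μA, λ)`. (b) If all `Aᵢ` equal a maximally monotone `A`,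
then `R_μ(A, λ) = A`. -/
theorem stmt4 {n : ℕ} (hn : 0 < n) {μ : ℝ} (hμ : 0 < μ) (lam : Fin n → ℝ)
    (hpos : ∀ i, 0 < lam i) (hsum : ∑ i, lam i = 1) (A : Fin n → H → Set H)
    (hA : ∀ i, SVP.IsMaxMonotone (A i)) :
    (∀ α : ℝ, 0 < α →
      SVP.resAvg μ lam (fun i => SVP.smul α (A i))
        = SVP.smul α (SVP.resAvg (α * μ) lam A)) ∧
    SVP.resAvg μ lam A = SVP.smul μ⁻¹ (SVP.resAvg 1 lam (fun i => SVP.smul μ (A i))) ∧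
    (∀ B : H → Set H, SVP.IsMaxMonotone B → (∀ i, A i = B) →
      SVP.resAvg μ lam A = B) :=
  stmt4_general hμ lam hsum A
end

section
/- Let H be a real Hilbert space, I = {1,...,n}, μ > 0, and for each i ∈ I let λ_i > 0 with Σ_{i∈I} λ_i = 1 and let A_i : H ⇉ H be maximally monotone. Then the Fitzpatrick functions satisfy F_{μ R_μ(A,λ)} ≤ Σ_{i∈I} λ_i F_{μ A_i} pointwise on H × H, and Σ_{i∈I} λ_i dom F_{μ A_i} ⊆ dom F_{μ R_μ(A,λ)} (Minkowski sum of the domains). -/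
/-!
Every point of `gra (μ R_μ(A, λ))` has the form `(Z, c - Z)` with `Z = Σᵢ λᵢ zᵢ` and
`(zᵢ, c - zᵢ) ∈ gra (μ Aᵢ)`. Pairing it with `P = Σᵢ λᵢ pᵢ`, `pᵢ = (xᵢ, vᵢ)`, in the Fitzpatrick
integrand exceeds the `λ`-average of the pairings of `(zᵢ, c - zᵢ)` with `pᵢ` by at most
`Σᵢ λᵢ ‖dᵢ - D‖² / 4`, where `dᵢ = xᵢ - vᵢ` and `D = Σᵢ λᵢ dᵢ`: the terms linear in `c` agree,
and the rest is a weighted covariance `Σᵢ λᵢ ⟪zᵢ - Z, (zᵢ - Z) - (dᵢ - D)⟫`, bounded below by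
completing the square. For `pᵢ = p` the error vanishes, which gives the inequality; in general it
is a finite constant, which gives the inclusion of domains.
-/

open RealInnerProductSpace

variable {H : Type*} [NormedAddCommGroup H] [InnerProductSpace ℝ H] [CompleteSpace H]

/-- The Fitzpatrick function of a set-valued mapping `A`:
`F_A(x, v) = sup_{(z,w) ∈ gra A} (⟪w, x⟫ + ⟪v, z⟫ − ⟪w, z⟫)`, valued in `EReal`. -/
noncomputable def fitz (A : H → Set H) : H × H → EReal :=
  fun p => ⨆ q ∈ SVP.graph A, ((⟪q.2, p.1⟫ + ⟪p.2, q.1⟫ - ⟪q.2, q.1⟫ : ℝ) : EReal)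


theorem EReal.coe_finset_sum {ι : Type*} (s : Finset ι) (f : ι → ℝ) :
    ((∑ i ∈ s, f i : ℝ) : EReal) = ∑ i ∈ s, (f i : EReal) :=
  map_sum (⟨⟨Real.toEReal, EReal.coe_zero⟩, EReal.coe_add⟩ : ℝ →+ EReal) f s

section InnerProduct

variable {E : Type*} [NormedAddCommGroup E] [InnerProductSpace ℝ E]

theorem sum_mul_inner_eq_inner_add_sum_mul_inner_sub {ι : Type*} (s : Finset ι) {lam : ι → ℝ}
    (hsum : ∑ i ∈ s, lam i = 1) {a b : ι → E} {a₀ b₀ : E}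
    (ha : ∑ i ∈ s, lam i • a i = a₀) (hb : ∑ i ∈ s, lam i • b i = b₀) :
    ∑ i ∈ s, lam i * ⟪a i, b i⟫ = ⟪a₀, b₀⟫ + ∑ i ∈ s, lam i * ⟪a i - a₀, b i - b₀⟫ := by
  have hab : ∑ i ∈ s, lam i * ⟪a i, b₀⟫ = ⟪a₀, b₀⟫ := by
    simp only [← ha, sum_inner, real_inner_smul_left]
  have hba : ∑ i ∈ s, lam i * ⟪a₀, b i⟫ = ⟪a₀, b₀⟫ := by
    simp only [← hb, inner_sum, real_inner_smul_right]
  have hconst : ∑ i ∈ s, lam i * ⟪a₀, b₀⟫ = ⟪a₀, b₀⟫ := by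
    rw [← Finset.sum_mul, hsum, one_mul]
  simp only [inner_sub_left, inner_sub_right, mul_sub, Finset.sum_sub_distrib, hab, hba, hconst]
  ring

theorem neg_sq_div_four_le_inner_sub (a b : E) : -(‖b‖ ^ 2 / 4) ≤ ⟪a, a - b⟫ := by
  have h : ‖a - (2⁻¹ : ℝ) • b‖ ^ 2 = ⟪a, a - b⟫ + ‖b‖ ^ 2 / 4 := by
    simp only [← real_inner_self_eq_norm_sq, inner_sub_left, inner_sub_right,
      real_inner_smul_left, real_inner_smul_right, real_inner_comm a b]
    ring
  linarith [sq_nonneg ‖a - (2⁻¹ : ℝ) • b‖]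

def fitzPairing (q p : E × E) : ℝ := ⟪q.2, p.1⟫ + ⟪p.2, q.1⟫ - ⟪q.2, q.1⟫

theorem fitzPairing_mk_sub (c z : E) (p : E × E) :
    fitzPairing (z, c - z) p = ⟪c, p.1 - z⟫ + ⟪z, z - (p.1 - p.2)⟫ := by
  simp only [fitzPairing, inner_sub_left, inner_sub_right, real_inner_comm p.2 z,
    real_inner_comm p.1 z]
  ring

theorem fitzPairing_sum_le {ι : Type*} [Fintype ι] {lam : ι → ℝ} (hlam : ∀ i, 0 ≤ lam i)
    (hsum : ∑ i, lam i = 1) (c : E) (z : ι → E) (p : ι → E × E) :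
    fitzPairing (∑ i, lam i • z i, c - ∑ i, lam i • z i) (∑ i, lam i • p i) ≤
      ∑ i, lam i * (fitzPairing (z i, c - z i) (p i) +
        ‖(p i).1 - (p i).2 - ∑ j, lam j • ((p j).1 - (p j).2)‖ ^ 2 / 4) := by
  set Z := ∑ i, lam i • z i
  set d : ι → E := fun i => (p i).1 - (p i).2
  set D := ∑ j, lam j • d j
  set X := ∑ i, lam i • (p i).1
  have hP : ∑ i, lam i • p i = (X, ∑ i, lam i • (p i).2) := by
    ext <;> simp only [X, Prod.fst_sum, Prod.snd_sum, Prod.smul_fst, Prod.smul_snd]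
  have hD : D = X - ∑ i, lam i • (p i).2 := by
    simp only [D, d, smul_sub, Finset.sum_sub_distrib, X]
  have hc : ∑ i, lam i * ⟪c, (p i).1 - z i⟫ = ⟪c, X - Z⟫ := by
    simp only [X, Z, ← Finset.sum_sub_distrib, ← smul_sub, inner_sum, real_inner_smul_right]
  -- the gap between the two sides is the weighted covariance of `zᵢ` and `zᵢ - dᵢ`
  have hvar := sum_mul_inner_eq_inner_add_sum_mul_inner_sub Finset.univ hsum
    (a := z) (b := fun i => z i - d i) (a₀ := Z) rfl (b₀ := Z - D)
    (by simp only [smul_sub, Finset.sum_sub_distrib, Z, D])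
  have hdev : ∀ i, -(‖d i - D‖ ^ 2 / 4) ≤ ⟪z i - Z, z i - d i - (Z - D)⟫ := fun i => by
    convert neg_sq_div_four_le_inner_sub (z i - Z) (d i - D) using 2
    abel
  have hnonneg : 0 ≤ ∑ i, lam i * (⟪z i - Z, z i - d i - (Z - D)⟫ + ‖d i - D‖ ^ 2 / 4) :=
    Finset.sum_nonneg fun i _ => mul_nonneg (hlam i) (by linarith [hdev i])
  have hd : ∀ i, (p i).1 - (p i).2 = d i := fun _ => rfl
  simp only [mul_add, Finset.sum_add_distrib] at hnonneg
  rw [hP, fitzPairing_mk_sub, ← hD]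
  simp only [fitzPairing_mk_sub, hd, mul_add, Finset.sum_add_distrib, hc, hvar]
  linarith

/-- Writing `x ∈ Σᵢ λᵢ (Aᵢ + μ⁻¹ Id)⁻¹ u` as `x = Σᵢ λᵢ zᵢ`, the graph of `μ R_μ(A, λ)` is
parametrised by `c = μ u` and points `(zᵢ, c - zᵢ) ∈ gra (μ Aᵢ)`. -/
theorem SVP.exists_of_mem_smul_resAvg {n : ℕ} {μ : ℝ} (hμ : μ ≠ 0) {lam : Fin n → ℝ}
    {A : Fin n → E → Set E} {x w : E} (h : w ∈ smul μ (resAvg μ lam A) x) :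
    ∃ (c : E) (z : Fin n → E), (∀ i, c - z i ∈ smul μ (A i) (z i)) ∧
      x = ∑ i, lam i • z i ∧ w = c - x := by
  obtain ⟨_, ⟨u, ⟨z, hz, hx⟩, _, ⟨_, rfl, rfl⟩, rfl⟩, rfl⟩ := h
  refine ⟨μ • u, z, fun i => ?_, hx, ?_⟩
  · obtain ⟨a, ha, _, ⟨_, rfl, rfl⟩, hu⟩ := hz i
    refine ⟨a, ha, ?_⟩
    simp only [hu, smul_add, smul_smul, mul_inv_cancel₀ hμ, one_smul, add_sub_cancel_right]
  · simp only [smul_sub, smul_smul, mul_inv_cancel₀ hμ, one_smul]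

theorem exists_fitzPairing_le_of_mem_graph_smul_resAvg {n : ℕ} {μ : ℝ} (hμ : μ ≠ 0)
    {lam : Fin n → ℝ} (hlam : ∀ i, 0 ≤ lam i) (hsum : ∑ i, lam i = 1) {A : Fin n → E → Set E}
    {q : E × E} (hq : q ∈ SVP.graph (SVP.smul μ (SVP.resAvg μ lam A))) (p : Fin n → E × E) :
    ∃ r : Fin n → E × E, (∀ i, r i ∈ SVP.graph (SVP.smul μ (A i))) ∧
      fitzPairing q (∑ i, lam i • p i) ≤
        ∑ i, lam i * (fitzPairing (r i) (p i) +
          ‖(p i).1 - (p i).2 - ∑ j, lam j • ((p j).1 - (p j).2)‖ ^ 2 / 4) := by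
  obtain ⟨x, w⟩ := q
  obtain ⟨c, z, hz, rfl, rfl⟩ := SVP.exists_of_mem_smul_resAvg (x := x) (w := w) hμ hq
  exact ⟨fun i => (z i, c - z i), hz, fitzPairing_sum_le hlam hsum c z p⟩

theorem fitzPairing_le_fitz {A : E → Set E} {q : E × E} (hq : q ∈ SVP.graph A) (p : E × E) :
    (fitzPairing q p : EReal) ≤ fitz A p :=
  le_iSup₂ (f := fun q (_ : q ∈ SVP.graph A) => (fitzPairing q p : EReal)) q hq

theorem fitzPairing_le_toReal_fitz {A : E → Set E} {q p : E × E} (hq : q ∈ SVP.graph A)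
    (hp : fitz A p ≠ ⊤) : fitzPairing q p ≤ (fitz A p).toReal :=
  EReal.coe_le_coe_iff.1 ((fitzPairing_le_fitz hq p).trans (EReal.le_coe_toReal hp))

theorem fitz_smul_resAvg_le {n : ℕ} {μ : ℝ} (hμ : μ ≠ 0) {lam : Fin n → ℝ}
    (hlam : ∀ i, 0 ≤ lam i) (hsum : ∑ i, lam i = 1) (A : Fin n → E → Set E) (p : E × E) :
    fitz (SVP.smul μ (SVP.resAvg μ lam A)) p ≤
      ∑ i, (lam i : EReal) * fitz (SVP.smul μ (A i)) p := by
  refine iSup₂_le fun q hq => ?_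
  obtain ⟨r, hr, hle⟩ :=
    exists_fitzPairing_le_of_mem_graph_smul_resAvg hμ hlam hsum hq (fun _ => p)
  simp only [← Finset.sum_smul, hsum, one_smul, sub_self, norm_zero, zero_pow two_ne_zero,
    zero_div, add_zero] at hle
  calc (fitzPairing q p : EReal)
      ≤ ((∑ i, lam i * fitzPairing (r i) p : ℝ) : EReal) := by
        exact_mod_cast hle
    _ = ∑ i, (lam i : EReal) * fitzPairing (r i) p := by
        simp only [EReal.coe_finset_sum, EReal.coe_mul]
    _ ≤ ∑ i, (lam i : EReal) * fitz (SVP.smul μ (A i)) p :=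
        Finset.sum_le_sum fun i _ =>
          mul_le_mul_of_nonneg_left (fitzPairing_le_fitz (hr i) p) (EReal.coe_nonneg.2 (hlam i))

theorem fitz_smul_resAvg_sum_lt_top {n : ℕ} {μ : ℝ} (hμ : μ ≠ 0) {lam : Fin n → ℝ}
    (hlam : ∀ i, 0 ≤ lam i) (hsum : ∑ i, lam i = 1) (A : Fin n → E → Set E)
    (p : Fin n → E × E) (hp : ∀ i, fitz (SVP.smul μ (A i)) (p i) < ⊤) :
    fitz (SVP.smul μ (SVP.resAvg μ lam A)) (∑ i, lam i • p i) < ⊤ := by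
  refine lt_of_le_of_lt (iSup₂_le fun q hq => ?_) (EReal.coe_lt_top (∑ i, lam i *
    ((fitz (SVP.smul μ (A i)) (p i)).toReal +
      ‖(p i).1 - (p i).2 - ∑ j, lam j • ((p j).1 - (p j).2)‖ ^ 2 / 4)))
  obtain ⟨r, hr, hle⟩ := exists_fitzPairing_le_of_mem_graph_smul_resAvg hμ hlam hsum hq p
  refine EReal.coe_le_coe_iff.2 (hle.trans (Finset.sum_le_sum fun i _ => ?_))
  gcongr
  · exact hlam i
  · exact fitzPairing_le_toReal_fitz (hr i) (hp i).ne

end InnerProduct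

theorem stmt9_general {n : ℕ} {μ : ℝ} (hμ : 0 < μ) (lam : Fin n → ℝ)
    (hpos : ∀ i, 0 < lam i) (hsum : ∑ i, lam i = 1) (A : Fin n → H → Set H) :
    (∀ p : H × H,
      fitz (SVP.smul μ (SVP.resAvg μ lam A)) p
        ≤ ∑ i, ((lam i : ℝ) : EReal) * fitz (SVP.smul μ (A i)) p) ∧
    {q : H × H | ∃ p : Fin n → H × H,
        (∀ i, p i ∈ {r : H × H | fitz (SVP.smul μ (A i)) r < ⊤}) ∧
        q = ∑ i, lam i • p i} ⊆
      {r : H × H | fitz (SVP.smul μ (SVP.resAvg μ lam A)) r < ⊤} := by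
  have hlam : ∀ i, 0 ≤ lam i := fun i => (hpos i).le
  refine ⟨fitz_smul_resAvg_le hμ.ne' hlam hsum A, ?_⟩
  rintro _ ⟨p, hp, rfl⟩
  exact fitz_smul_resAvg_sum_lt_top hμ.ne' hlam hsum A p hp

/-- `F_{μR_μ(A,λ)} ≤ Σᵢ λᵢ F_{μAᵢ}` pointwise, and
`Σᵢ λᵢ dom F_{μAᵢ} ⊆ dom F_{μR_μ(A,λ)}`. -/
theorem stmt9 {n : ℕ} (hn : 0 < n) {μ : ℝ} (hμ : 0 < μ) (lam : Fin n → ℝ)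
    (hpos : ∀ i, 0 < lam i) (hsum : ∑ i, lam i = 1) (A : Fin n → H → Set H)
    (hA : ∀ i, SVP.IsMaxMonotone (A i)) :
    (∀ p : H × H,
      fitz (SVP.smul μ (SVP.resAvg μ lam A)) p
        ≤ ∑ i, ((lam i : ℝ) : EReal) * fitz (SVP.smul μ (A i)) p) ∧
    {q : H × H | ∃ p : Fin n → H × H,
        (∀ i, p i ∈ {r : H × H | fitz (SVP.smul μ (A i)) r < ⊤}) ∧
        q = ∑ i, lam i • p i} ⊆
      {r : H × H | fitz (SVP.smul μ (SVP.resAvg μ lam A)) r < ⊤} :=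
  stmt9_general hμ lam hpos hsum A
end

section
/- Let H be a real Hilbert space, I = {1,...,n}, μ > 0, and for each i ∈ I let λ_i > 0 with Σ_{i∈I} λ_i = 1 and let A_i : H ⇉ H be maximally monotone. If there exists i₀ ∈ I such that A_{i₀} is at most single-valued (i.e., for every x ∈ H the set A_{i₀} x is either empty or a singleton), then R_μ(A, λ) is at most single-valued. -/
/-!
Each `A_i + μ⁻¹ Id` is `μ⁻¹`-strongly monotone. If `w, w'` both lie in
`(Σ_i λ_i (A_i + μ⁻¹ Id)⁻¹)⁻¹ x`, witnessed by `x = Σ_i λ_i v_i = Σ_i λ_i v'_i` with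
`w ∈ (A_i + μ⁻¹ Id) v_i` and `w' ∈ (A_i + μ⁻¹ Id) v'_i`, then the nonnegative terms
`λ_i ⟪v_i - v'_i, w - w'⟫` add up to `⟪x - x, w - w'⟫ = 0`, so strong monotonicity forces
`v = v'`. Then `w` and `w'` lie in the same value of `A_{i₀} + μ⁻¹ Id`, a subsingleton.
-/

open RealInnerProductSpace

namespace SVP

variable {H : Type*} [NormedAddCommGroup H] [InnerProductSpace ℝ H]

def IsStronglyMonotone (c : ℝ) (A : H → Set H) : Prop :=
  ∀ ⦃x y u v : H⦄, u ∈ A x → v ∈ A y → c * ‖x - y‖ ^ 2 ≤ ⟪x - y, u - v⟫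

theorem mem_add_smul_id {A : H → Set H} {c : ℝ} {x w : H} :
    w ∈ add A (smul c id') x ↔ w - c • x ∈ A x := by
  simp [add, smul, id', ← sub_eq_iff_eq_add]

theorem subsingleton_add_smul_id {A : H → Set H} {x : H} (hA : (A x).Subsingleton) (c : ℝ) :
    (add A (smul c id') x).Subsingleton := by
  intro w hw w' hw'
  rw [mem_add_smul_id] at hw hw'
  simpa using hA hw hw'

theorem subsingleton_sub_smul_id {A : H → Set H} {x : H} (hA : (A x).Subsingleton) (c : ℝ) :
    (sub A (smul c id') x).Subsingleton := by
  rintro _ ⟨w, hw, _, ⟨x, rfl, rfl⟩, rfl⟩ _ ⟨w', hw', _, ⟨x, rfl, rfl⟩, rfl⟩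
  rw [hA hw hw']

theorem IsMonotone.isStronglyMonotone_add_smul_id {A : H → Set H} (hA : IsMonotone A) (c : ℝ) :
    IsStronglyMonotone c (add A (smul c id')) := by
  intro x y u v hu hv
  rw [mem_add_smul_id] at hu hv
  have hsplit : u - v = (u - c • x) - (v - c • y) + c • (x - y) := by
    rw [smul_sub]; abel
  rw [hsplit, inner_add_right, real_inner_smul_right, real_inner_self_eq_norm_sq]
  linarith [hA hu hv]

theorem IsStronglyMonotone.eq_of_sum_smul_eq {n : ℕ} {c : ℝ} (hc : 0 < c) {lam : Fin n → ℝ}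
    (hlam : ∀ i, 0 < lam i) {B : Fin n → H → Set H} (hB : ∀ i, IsStronglyMonotone c (B i))
    {w w' : H} {v v' : Fin n → H} (hv : ∀ i, w ∈ B i (v i)) (hv' : ∀ i, w' ∈ B i (v' i))
    (hsum : ∑ i, lam i • v i = ∑ i, lam i • v' i) : v = v' := by
  have hstrong (i : Fin n) : c * ‖v i - v' i‖ ^ 2 ≤ ⟪v i - v' i, w - w'⟫ := hB i (hv i) (hv' i)
  have hterm_nonneg (i : Fin n) : 0 ≤ lam i * ⟪v i - v' i, w - w'⟫ :=
    mul_nonneg (hlam i).le ((by positivity : 0 ≤ c * ‖v i - v' i‖ ^ 2).trans (hstrong i))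
  have hterms_sum : ∑ i, lam i * ⟪v i - v' i, w - w'⟫ = 0 := by
    have hzero : ∑ i, lam i • (v i - v' i) = 0 := by
      simp only [smul_sub, Finset.sum_sub_distrib, hsum, sub_self]
    simpa [sum_inner, real_inner_smul_left] using congrArg (⟪·, w - w'⟫) hzero
  funext i
  have hinner : ⟪v i - v' i, w - w'⟫ = 0 := by
    have := (Finset.sum_eq_zero_iff_of_nonneg fun i _ => hterm_nonneg i).1 hterms_sum i
      (Finset.mem_univ i)
    exact (mul_eq_zero.1 this).resolve_left (hlam i).ne'
  have hnorm : ‖v i - v' i‖ ^ 2 = 0 := by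
    nlinarith [hstrong i, sq_nonneg ‖v i - v' i‖]
  simpa [sub_eq_zero] using hnorm

theorem subsingleton_inv_lcomb_inv {n : ℕ} {c : ℝ} (hc : 0 < c) {lam : Fin n → ℝ}
    (hlam : ∀ i, 0 < lam i) {B : Fin n → H → Set H} (hB : ∀ i, IsStronglyMonotone c (B i))
    (hsingle : ∃ i₀, ∀ y, (B i₀ y).Subsingleton) (x : H) :
    (inv (lcomb lam fun i => inv (B i)) x).Subsingleton := by
  obtain ⟨i₀, hi₀⟩ := hsingle
  rintro w ⟨v, hv, rfl⟩ w' ⟨v', hv', hsum⟩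
  obtain rfl := IsStronglyMonotone.eq_of_sum_smul_eq hc hlam hB hv hv' hsum
  exact hi₀ _ (hv i₀) (hv' i₀)

end SVP

variable {H : Type*} [NormedAddCommGroup H] [InnerProductSpace ℝ H] [CompleteSpace H]

theorem stmt11_general {n : ℕ} {μ : ℝ} (hμ : 0 < μ) (lam : Fin n → ℝ)
    (hpos : ∀ i, 0 < lam i) (A : Fin n → H → Set H)
    (hA : ∀ i, SVP.IsMaxMonotone (A i))
    (hsingle : ∃ i₀, ∀ x : H, (A i₀ x).Subsingleton) :
    ∀ x : H, (SVP.resAvg μ lam A x).Subsingleton := by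
  intro x
  obtain ⟨i₀, hi₀⟩ := hsingle
  have hstrong (i : Fin n) := (hA i).1.isStronglyMonotone_add_smul_id μ⁻¹
  have hinv := SVP.subsingleton_inv_lcomb_inv (inv_pos.2 hμ) hpos hstrong
    ⟨i₀, fun y => SVP.subsingleton_add_smul_id (hi₀ y) μ⁻¹⟩ x
  exact SVP.subsingleton_sub_smul_id hinv μ⁻¹

/-- Single-valuedness is dominant: if some `A_{i₀}` is at most single-valued,
then so is `R_μ(A, λ)`. -/
theorem stmt11 {n : ℕ} (hn : 0 < n) {μ : ℝ} (hμ : 0 < μ) (lam : Fin n → ℝ)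
    (hpos : ∀ i, 0 < lam i) (hsum : ∑ i, lam i = 1) (A : Fin n → H → Set H)
    (hA : ∀ i, SVP.IsMaxMonotone (A i))
    (hsingle : ∃ i₀, ∀ x : H, (A i₀ x).Subsingleton) :
    ∀ x : H, (SVP.resAvg μ lam A x).Subsingleton :=
  stmt11_general hμ lam hpos A hA hsingle
end

section
/- Let H be a real Hilbert space, I = {1,...,n}, μ > 0, and for each i ∈ I let λ_i > 0 with Σ_{i∈I} λ_i = 1 and let A_i : H ⇉ H be maximally monotone. If there exists i₀ ∈ I such that A_{i₀} is strictly monotone, then R_μ(A, λ) is strictly monotone. -/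
open RealInnerProductSpace

variable {H : Type*} [NormedAddCommGroup H] [InnerProductSpace ℝ H] [CompleteSpace H]

/-- A set-valued mapping is strictly monotone if
`⟪x − y, u − v⟫ > 0` whenever `u ∈ A x`, `v ∈ A y` and `x ≠ y`. -/
def IsStrictlyMonotone (A : H → Set H) : Prop :=
  ∀ ⦃x y u v : H⦄, u ∈ A x → v ∈ A y → x ≠ y → 0 < ⟪x - y, u - v⟫

/-!
If `u ∈ R_μ(A, λ) x`, then `x = Σ λᵢ pᵢ` for points `pᵢ` sharing one `w ∈ (Aᵢ + μ⁻¹ Id) pᵢ`, and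
`u = w - μ⁻¹ x`; likewise `y = Σ λᵢ qᵢ`, `z` and `v`. With `dᵢ = pᵢ - qᵢ`, expanding the squares gives
`⟪x - y, u - v⟫ = Σ λᵢ ⟪dᵢ, aᵢ - bᵢ⟫ + μ⁻¹ Σ λᵢ ‖dᵢ - (x - y)‖²`, where `aᵢ = w - μ⁻¹ pᵢ ∈ Aᵢ pᵢ` and
`bᵢ = z - μ⁻¹ qᵢ ∈ Aᵢ qᵢ`: a weighted sum of monotonicity gaps plus a variance. Both parts are
nonnegative. If `x ≠ y`, either some `dᵢ` differs from `x - y` and the variance is positive, or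
every `dᵢ = x - y ≠ 0` and the gap at the strictly monotone index is positive.
-/

open Finset

section WeightedVariance

variable {ι E : Type*} [NormedAddCommGroup E] [InnerProductSpace ℝ E]

theorem sum_mul_inner_eq_inner_sum_smul (s : Finset ι) (lam : ι → ℝ) (d : ι → E) (v : E) :
    ∑ i ∈ s, lam i * ⟪d i, v⟫ = ⟪∑ i ∈ s, lam i • d i, v⟫ := by
  simp only [sum_inner, real_inner_smul_left]

theorem sum_mul_norm_sub_sum_smul_sq {s : Finset ι} {lam : ι → ℝ} (hsum : ∑ i ∈ s, lam i = 1)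
    (d : ι → E) :
    ∑ i ∈ s, lam i * ‖d i - ∑ j ∈ s, lam j • d j‖ ^ 2
      = ∑ i ∈ s, lam i * ‖d i‖ ^ 2 - ‖∑ j ∈ s, lam j • d j‖ ^ 2 := by
  generalize hm : ∑ j ∈ s, lam j • d j = m
  calc ∑ i ∈ s, lam i * ‖d i - m‖ ^ 2
      = ∑ i ∈ s, lam i * ‖d i‖ ^ 2 - 2 * ∑ i ∈ s, lam i * ⟪d i, m⟫
          + (∑ i ∈ s, lam i) * ‖m‖ ^ 2 := by
        rw [sum_mul, mul_sum, ← sum_sub_distrib, ← sum_add_distrib]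
        refine sum_congr rfl fun i _ => ?_
        rw [norm_sub_sq_real]
        ring
    _ = ∑ i ∈ s, lam i * ‖d i‖ ^ 2 - ‖m‖ ^ 2 := by
        rw [sum_mul_inner_eq_inner_sum_smul, hm, real_inner_self_eq_norm_sq, hsum]
        ring

theorem inner_sum_smul_sub_smul_eq {s : Finset ι} {lam : ι → ℝ} (hsum : ∑ i ∈ s, lam i = 1)
    (c : ℝ) (d : ι → E) (g : E) :
    ⟪∑ j ∈ s, lam j • d j, g - c • ∑ j ∈ s, lam j • d j⟫
      = ∑ i ∈ s, lam i * ⟪d i, g - c • d i⟫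
        + c * ∑ i ∈ s, lam i * ‖d i - ∑ j ∈ s, lam j • d j‖ ^ 2 := by
  have hsplit : ∑ i ∈ s, lam i * ⟪d i, g - c • d i⟫
      = ∑ i ∈ s, lam i * ⟪d i, g⟫ - c * ∑ i ∈ s, lam i * ‖d i‖ ^ 2 := by
    rw [mul_sum, ← sum_sub_distrib]
    refine sum_congr rfl fun i _ => ?_
    rw [inner_sub_right, real_inner_smul_right, real_inner_self_eq_norm_sq]
    ring
  rw [sum_mul_norm_sub_sum_smul_sq hsum, hsplit, sum_mul_inner_eq_inner_sum_smul, inner_sub_right,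
    real_inner_smul_right, real_inner_self_eq_norm_sq]
  ring

theorem inner_sum_smul_sub_sum_smul_eq {s : Finset ι} {lam : ι → ℝ}
    (hsum : ∑ i ∈ s, lam i = 1) (c : ℝ) (p q : ι → E) (w z : E) :
    ⟪∑ i ∈ s, lam i • p i - ∑ i ∈ s, lam i • q i,
        (w - c • ∑ i ∈ s, lam i • p i) - (z - c • ∑ i ∈ s, lam i • q i)⟫
      = ∑ i ∈ s, lam i * ⟪p i - q i, (w - c • p i) - (z - c • q i)⟫
        + c * ∑ i ∈ s, lam i * ‖(p i - q i) - (∑ j ∈ s, lam j • p j - ∑ j ∈ s, lam j • q j)‖ ^ 2 := by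
  have hrearrange : ∀ a b : E, (w - c • a) - (z - c • b) = (w - z) - c • (a - b) := by
    intro a b
    rw [smul_sub]
    abel
  simp only [hrearrange, ← sum_sub_distrib, ← smul_sub]
  exact inner_sum_smul_sub_smul_eq hsum c (fun i => p i - q i) (w - z)

end WeightedVariance

section ResolventAverage

variable {E : Type*} [NormedAddCommGroup E] [InnerProductSpace ℝ E]

theorem SVP.smul_id'_apply (c : ℝ) (y : E) : SVP.smul c SVP.id' y = {c • y} := by
  simp [SVP.smul, SVP.id']

theorem SVP.mem_add_smul_id'_iff {A : E → Set E} {c : ℝ} {y w : E} :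
    w ∈ SVP.add A (SVP.smul c SVP.id') y ↔ w - c • y ∈ A y := by
  simp only [SVP.add, SVP.smul_id'_apply, Set.mem_ofPred_eq, Set.mem_singleton_iff,
    exists_eq_left]
  exact ⟨fun ⟨u, hu, hw⟩ => by rwa [hw, add_sub_cancel_right],
    fun h => ⟨_, h, (sub_add_cancel w _).symm⟩⟩

theorem SVP.mem_resAvg_iff_s12 {n : ℕ} {μ : ℝ} {lam : Fin n → ℝ} {A : Fin n → E → Set E}
    {x u : E} :
    u ∈ SVP.resAvg μ lam A x ↔ ∃ (w : E) (p : Fin n → E),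
      (∀ i, w - μ⁻¹ • p i ∈ A i (p i)) ∧ x = ∑ i, lam i • p i ∧ u = w - μ⁻¹ • x := by
  simp only [SVP.resAvg, SVP.sub, SVP.inv, SVP.lcomb, SVP.smul_id'_apply, Set.mem_ofPred_eq,
    Set.mem_singleton_iff, exists_eq_left, SVP.mem_add_smul_id'_iff]
  exact ⟨fun ⟨w, ⟨p, hp, hx⟩, hu⟩ => ⟨w, p, hp, hx, hu⟩,
    fun ⟨w, p, hp, hx, hu⟩ => ⟨w, ⟨p, hp, hx⟩, hu⟩⟩

end ResolventAverage

theorem stmt12_general {n : ℕ} {μ : ℝ} (hμ : 0 < μ) (lam : Fin n → ℝ)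
    (hpos : ∀ i, 0 < lam i) (hsum : ∑ i, lam i = 1) (A : Fin n → H → Set H)
    (hA : ∀ i, SVP.IsMaxMonotone (A i))
    (hstrict : ∃ i₀, IsStrictlyMonotone (A i₀)) :
    IsStrictlyMonotone (SVP.resAvg μ lam A) := by
  obtain ⟨i₀, hi₀⟩ := hstrict
  intro x y u v hu hv hxy
  obtain ⟨w, p, hp, rfl, rfl⟩ := SVP.mem_resAvg_iff_s12.1 hu
  obtain ⟨z, q, hq, rfl, rfl⟩ := SVP.mem_resAvg_iff_s12.1 hv
  rw [inner_sum_smul_sub_sum_smul_eq hsum]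
  have hgap i : 0 ≤ lam i * ⟪p i - q i, (w - μ⁻¹ • p i) - (z - μ⁻¹ • q i)⟫ :=
    mul_nonneg (hpos i).le ((hA i).1 (hp i) (hq i))
  have hvar i : 0 ≤ lam i * ‖(p i - q i) - (∑ j, lam j • p j - ∑ j, lam j • q j)‖ ^ 2 :=
    mul_nonneg (hpos i).le (sq_nonneg _)
  by_cases hconst : ∀ i, p i - q i = ∑ j, lam j • p j - ∑ j, lam j • q j
  · have hpq : p i₀ ≠ q i₀ := fun h => hxy (sub_eq_zero.1 (by rw [← hconst i₀, h, sub_self]))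
    refine add_pos_of_pos_of_nonneg (sum_pos' (fun i _ => hgap i) ⟨i₀, mem_univ _, ?_⟩)
      (mul_nonneg (inv_nonneg.2 hμ.le) (sum_nonneg fun i _ => hvar i))
    exact mul_pos (hpos i₀) (hi₀ (hp i₀) (hq i₀) hpq)
  · obtain ⟨j, hj⟩ := not_forall.1 hconst
    refine add_pos_of_nonneg_of_pos (sum_nonneg fun i _ => hgap i)
      (mul_pos (inv_pos.2 hμ) (sum_pos' (fun i _ => hvar i) ⟨j, mem_univ _, ?_⟩))
    exact mul_pos (hpos j) (pow_pos (norm_pos_iff.2 (sub_ne_zero.2 hj)) 2)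

/-- Strict monotonicity is dominant w.r.t. the resolvent average. -/
theorem stmt12 {n : ℕ} (hn : 0 < n) {μ : ℝ} (hμ : 0 < μ) (lam : Fin n → ℝ)
    (hpos : ∀ i, 0 < lam i) (hsum : ∑ i, lam i = 1) (A : Fin n → H → Set H)
    (hA : ∀ i, SVP.IsMaxMonotone (A i))
    (hstrict : ∃ i₀, IsStrictlyMonotone (A i₀)) :
    IsStrictlyMonotone (SVP.resAvg μ lam A) :=
  stmt12_general hμ lam hpos hsum A hA hstrict
end

section
/- Let H be a real Hilbert space, I = {1,...,n}, μ > 0, and for each i ∈ I let λ_i > 0 with Σ_{i∈I} λ_i = 1, let ε_i ≥ 0 be a real number, and let A_i : H ⇉ H be maximally monotone and ε_i-monotone. Then R_μ(A, λ) is ε-monotone, where ε = (Σ_{i∈I} λ_i (ε_i + μ⁻¹)⁻¹)⁻¹ − μ⁻¹. In particular, if there exists i₀ ∈ I such that ε_{i₀} > 0, then ε > 0, so R_μ(A, λ) is strongly monotone with constant ε. -/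
/-!
A point `w ∈ R_μ(A, λ) x` is `u - μ⁻¹ x` where `x = Σ λᵢ vᵢ` and `u ∈ (Aᵢ + μ⁻¹ Id) vᵢ` for every `i`
with one common `u`. Each `Aᵢ + μ⁻¹ Id` is `(εᵢ + μ⁻¹)`-monotone, and a weighted Cauchy–Schwarz
inequality shows that averaging the inverses `vᵢ` with weights `λᵢ` yields a
`(Σ λᵢ (εᵢ + μ⁻¹)⁻¹)⁻¹`-monotone inverse; subtracting `μ⁻¹ Id` lowers the constant by `μ⁻¹`.
Since `(εᵢ + μ⁻¹)⁻¹ ≤ μ`, strictly when `εᵢ > 0`, that constant exceeds `μ⁻¹` as soon as one `εᵢ`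
is positive.
-/
open RealInnerProductSpace

variable {H : Type*} [NormedAddCommGroup H] [InnerProductSpace ℝ H] [CompleteSpace H]

/-- `A` is `ε`-monotone if `ε‖x − y‖² ≤ ⟪x − y, u − v⟫` whenever `u ∈ A x`, `v ∈ A y`. -/
def IsEpsMonotone (ε : ℝ) (A : H → Set H) : Prop :=
  ∀ ⦃x y u v : H⦄, u ∈ A x → v ∈ A y → ε * ‖x - y‖ ^ 2 ≤ ⟪x - y, u - v⟫

section

variable {E : Type*} [NormedAddCommGroup E] [InnerProductSpace ℝ E]

theorem inner_sub_smul_sub_sub_smul (c : ℝ) (x y u v : E) :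
    ⟪x - y, (u - c • x) - (v - c • y)⟫ = ⟪x - y, u - v⟫ - c * ‖x - y‖ ^ 2 := by
  rw [show (u - c • x) - (v - c • y) = (u - v) - c • (x - y) by rw [smul_sub]; abel,
    inner_sub_right, real_inner_smul_right, real_inner_self_eq_norm_sq]

theorem norm_sum_smul_sq_le {ι : Type*} (s : Finset ι) {lam c : ι → ℝ} (d : ι → E)
    (hlam : ∀ i ∈ s, 0 ≤ lam i) (hc : ∀ i ∈ s, 0 < c i) :
    ‖∑ i ∈ s, lam i • d i‖ ^ 2 ≤
      (∑ i ∈ s, lam i * (c i)⁻¹) * ∑ i ∈ s, lam i * c i * ‖d i‖ ^ 2 := by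
  have h_triangle : ‖∑ i ∈ s, lam i • d i‖ ≤ ∑ i ∈ s, lam i * ‖d i‖ :=
    (norm_sum_le _ _).trans_eq <| Finset.sum_congr rfl fun i hi => by
      rw [norm_smul, Real.norm_of_nonneg (hlam i hi)]
  calc ‖∑ i ∈ s, lam i • d i‖ ^ 2 ≤ (∑ i ∈ s, lam i * ‖d i‖) ^ 2 := by gcongr
    _ ≤ _ := Finset.sum_sq_le_sum_mul_sum_of_sq_le_mul s
        (fun i hi => mul_nonneg (hlam i hi) (inv_nonneg.2 (hc i hi).le))
        (fun i hi => by have := hlam i hi; have := (hc i hi).le; positivity)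
        (fun i hi => le_of_eq (by field_simp [(hc i hi).ne']))

theorem inv_sum_mul_inv_mul_norm_sum_smul_sq_le_inner {ι : Type*} (s : Finset ι)
    {lam c : ι → ℝ} (d : ι → E) (e : E) (hlam : ∀ i ∈ s, 0 ≤ lam i) (hc : ∀ i ∈ s, 0 < c i)
    (hd : ∀ i ∈ s, c i * ‖d i‖ ^ 2 ≤ ⟪d i, e⟫) :
    (∑ i ∈ s, lam i * (c i)⁻¹)⁻¹ * ‖∑ i ∈ s, lam i • d i‖ ^ 2 ≤ ⟪∑ i ∈ s, lam i • d i, e⟫ := by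
  set S := ∑ i ∈ s, lam i * (c i)⁻¹
  set T := ∑ i ∈ s, lam i * c i * ‖d i‖ ^ 2
  have hT_le : T ≤ ⟪∑ i ∈ s, lam i • d i, e⟫ := by
    rw [sum_inner]
    refine Finset.sum_le_sum fun i hi => ?_
    rw [real_inner_smul_left, mul_assoc]
    exact mul_le_mul_of_nonneg_left (hd i hi) (hlam i hi)
  have hT : 0 ≤ T := Finset.sum_nonneg fun i hi => by
    have := hlam i hi; have := (hc i hi).le; positivity
  have hS_nonneg : 0 ≤ S := Finset.sum_nonneg fun i hi => mul_nonneg (hlam i hi)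
    (inv_nonneg.2 (hc i hi).le)
  rcases hS_nonneg.eq_or_lt with hS | hS
  · -- junk case: `S⁻¹ = 0⁻¹ = 0`
    rw [← hS, inv_zero, zero_mul]
    exact hT.trans hT_le
  · rw [inv_mul_le_iff₀ hS]
    exact (norm_sum_smul_sq_le s d hlam hc).trans (mul_le_mul_of_nonneg_left hT_le hS.le)

theorem IsEpsMonotone.le_inner_of_sub_smul_mem {ε c : ℝ} {A : E → Set E}
    (hA : IsEpsMonotone ε A) {x y u v : E} (hu : u - c • x ∈ A x) (hv : v - c • y ∈ A y) :
    (ε + c) * ‖x - y‖ ^ 2 ≤ ⟪x - y, u - v⟫ := by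
  have := hA hu hv
  rw [inner_sub_smul_sub_sub_smul] at this
  linarith

namespace SVP

theorem exists_of_mem_resAvg {n : ℕ} {μ : ℝ} {lam : Fin n → ℝ} {A : Fin n → E → Set E}
    {x w : E} (hw : w ∈ resAvg μ lam A x) :
    ∃ (u : E) (v : Fin n → E), (∀ i, u - μ⁻¹ • v i ∈ A i (v i)) ∧
      x = ∑ i, lam i • v i ∧ w = u - μ⁻¹ • x := by
  obtain ⟨u, ⟨v, hv, hx⟩, _, ⟨_, rfl, rfl⟩, rfl⟩ := hw
  refine ⟨u, v, fun i => ?_, hx, rfl⟩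
  obtain ⟨a, ha, _, ⟨_, rfl, rfl⟩, rfl⟩ := hv i
  simpa using ha

theorem isEpsMonotone_resAvg {n : ℕ} {μ : ℝ} {lam eps : Fin n → ℝ} {A : Fin n → E → Set E}
    (hlam : ∀ i, 0 ≤ lam i) (hc : ∀ i, 0 < eps i + μ⁻¹)
    (hA : ∀ i, IsEpsMonotone (eps i) (A i)) :
    IsEpsMonotone ((∑ i, lam i * (eps i + μ⁻¹)⁻¹)⁻¹ - μ⁻¹) (resAvg μ lam A) := by
  intro x y _ _ hw hw'
  obtain ⟨u, v, hv, rfl, rfl⟩ := exists_of_mem_resAvg hw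
  obtain ⟨u', v', hv', rfl, rfl⟩ := exists_of_mem_resAvg hw'
  have key := inv_sum_mul_inv_mul_norm_sum_smul_sq_le_inner Finset.univ
    (fun i => v i - v' i) (u - u') (fun i _ => hlam i) (fun i _ => hc i)
    (fun i _ => (hA i).le_inner_of_sub_smul_mem (hv i) (hv' i))
  simp only [smul_sub, Finset.sum_sub_distrib] at key
  rw [inner_sub_smul_sub_sub_smul]
  linarith

end SVP

end

theorem inv_lt_inv_sum_mul_inv_add_inv {ι : Type*} {s : Finset ι} {μ : ℝ} {lam eps : ι → ℝ}
    {i₀ : ι} (hμ : 0 < μ) (hlam : ∀ i ∈ s, 0 ≤ lam i) (hsum : ∑ i ∈ s, lam i = 1)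
    (heps : ∀ i ∈ s, 0 ≤ eps i) (hi₀ : i₀ ∈ s) (hlam₀ : 0 < lam i₀) (heps₀ : 0 < eps i₀) :
    μ⁻¹ < (∑ i ∈ s, lam i * (eps i + μ⁻¹)⁻¹)⁻¹ := by
  have hμ' : 0 < μ⁻¹ := inv_pos.2 hμ
  have hS_pos : 0 < ∑ i ∈ s, lam i * (eps i + μ⁻¹)⁻¹ :=
    Finset.sum_pos' (fun i hi => mul_nonneg (hlam i hi) (by have := heps i hi; positivity))
      ⟨i₀, hi₀, by positivity⟩
  have hS_lt : ∑ i ∈ s, lam i * (eps i + μ⁻¹)⁻¹ < μ :=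
    calc ∑ i ∈ s, lam i * (eps i + μ⁻¹)⁻¹ < ∑ i ∈ s, lam i * μ :=
          Finset.sum_lt_sum
            (fun i hi => mul_le_mul_of_nonneg_left
              (inv_le_of_inv_le₀ hμ (le_add_of_nonneg_left (heps i hi))) (hlam i hi))
            ⟨i₀, hi₀, mul_lt_mul_of_pos_left
              (inv_lt_of_inv_lt₀ hμ (lt_add_of_pos_left _ heps₀)) hlam₀⟩
      _ = μ := by rw [← Finset.sum_mul, hsum, one_mul]
  simpa using inv_strictAnti₀ hS_pos hS_lt

theorem stmt13_general {n : ℕ} {μ : ℝ} (hμ : 0 < μ) (lam : Fin n → ℝ)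
    (hpos : ∀ i, 0 < lam i) (hsum : ∑ i, lam i = 1) (eps : Fin n → ℝ)
    (heps : ∀ i, 0 ≤ eps i) (A : Fin n → H → Set H)
    (hmono : ∀ i, IsEpsMonotone (eps i) (A i)) :
    IsEpsMonotone ((∑ i, lam i * (eps i + μ⁻¹)⁻¹)⁻¹ - μ⁻¹) (SVP.resAvg μ lam A) ∧
    ((∃ i₀, 0 < eps i₀) → 0 < (∑ i, lam i * (eps i + μ⁻¹)⁻¹)⁻¹ - μ⁻¹) := by
  have hc : ∀ i, 0 < eps i + μ⁻¹ := fun i => by have := heps i; positivity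
  refine ⟨SVP.isEpsMonotone_resAvg (fun i => (hpos i).le) hc hmono, fun ⟨i₀, hi₀⟩ => ?_⟩
  exact sub_pos.2 <| inv_lt_inv_sum_mul_inv_add_inv hμ (fun i _ => (hpos i).le) hsum
    (fun i _ => heps i) (Finset.mem_univ i₀) (hpos i₀) hi₀

/-- Strong monotonicity is dominant: if each `Aᵢ` is `εᵢ`-monotone, then
`R_μ(A,λ)` is `ε`-monotone with `ε = (Σᵢ λᵢ(εᵢ + μ⁻¹)⁻¹)⁻¹ − μ⁻¹`; in
particular, `ε > 0` as soon as some `ε_{i₀} > 0`. -/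
theorem stmt13 {n : ℕ} (hn : 0 < n) {μ : ℝ} (hμ : 0 < μ) (lam : Fin n → ℝ)
    (hpos : ∀ i, 0 < lam i) (hsum : ∑ i, lam i = 1) (eps : Fin n → ℝ)
    (heps : ∀ i, 0 ≤ eps i) (A : Fin n → H → Set H)
    (hA : ∀ i, SVP.IsMaxMonotone (A i)) (hmono : ∀ i, IsEpsMonotone (eps i) (A i)) :
    IsEpsMonotone ((∑ i, lam i * (eps i + μ⁻¹)⁻¹)⁻¹ - μ⁻¹) (SVP.resAvg μ lam A) ∧
    ((∃ i₀, 0 < eps i₀) → 0 < (∑ i, lam i * (eps i + μ⁻¹)⁻¹)⁻¹ - μ⁻¹) :=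
  stmt13_general hμ lam hpos hsum eps heps A hmono
end

section
/- Let H be a real Hilbert space, I = {1,...,n}, μ > 0, and for each i ∈ I let λ_i > 0 with Σ_{i∈I} λ_i = 1, let ε_i ≥ 0, and let f_i : H → (−∞,∞] be proper, lower semicontinuous and ε_i-convex. Then the proximal average p_μ(f, λ) is ε-convex, where ε = (Σ_{i∈I} λ_i (ε_i + μ⁻¹)⁻¹)⁻¹ − μ⁻¹. In particular, if there exists i₀ ∈ I such that ε_{i₀} > 0, then ε > 0 and p_μ(f, λ) is ε-strongly convex. -/
open RealInnerProductSpace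

variable {H : Type*} [NormedAddCommGroup H] [InnerProductSpace ℝ H] [CompleteSpace H]

/-- `f` (extended-real-valued, never `−∞`) is `ε`-convex:
`f((1−t)x + ty) + t(1−t)(ε/2)‖x − y‖² ≤ (1−t)f(x) + tf(y)`. -/
def IsEpsConvex (ε : ℝ) (f : H → EReal) : Prop :=
  ∀ x y : H, ∀ t : ℝ, 0 < t → t < 1 →
    f ((1 - t) • x + t • y) + ((t * (1 - t) * (ε / 2) * ‖x - y‖ ^ 2 : ℝ) : EReal)
      ≤ ((1 - t : ℝ) : EReal) * f x + ((t : ℝ) : EReal) * f y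

/-- The `λ`-weighted proximal average with parameter `μ`:
`p_μ(f, λ)(x) = μ⁻¹(−(1/2)‖x‖² + inf{Σᵢ λᵢ(μ fᵢ(xᵢ/λᵢ) + (1/2)‖xᵢ/λᵢ‖²) : Σᵢ xᵢ = x})`. -/
noncomputable def proxAvg {n : ℕ} (μ : ℝ) (lam : Fin n → ℝ) (f : Fin n → H → EReal) :
    H → EReal :=
  fun x => ((μ⁻¹ : ℝ) : EReal) *
    (((-(1 / 2 * ‖x‖ ^ 2) : ℝ) : EReal) +
      sInf {v : EReal | ∃ xs : Fin n → H, (∑ i, xs i) = x ∧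
        v = ∑ i, ((lam i : ℝ) : EReal) *
          (((μ : ℝ) : EReal) * f i ((lam i)⁻¹ • xs i)
            + ((1 / 2 * ‖(lam i)⁻¹ • xs i‖ ^ 2 : ℝ) : EReal))})


lemma norm_combo_sq (x y : H) (t : ℝ) :
    ‖(1 - t) • x + t • y‖ ^ 2
      = (1 - t) * ‖x‖ ^ 2 + t * ‖y‖ ^ 2 - t * (1 - t) * ‖x - y‖ ^ 2 := by
  have h : ∀ v : H, ‖v‖ ^ 2 = ⟪v, v⟫ := fun v => (real_inner_self_eq_norm_sq v).symm
  simp only [h, inner_add_left, inner_add_right, inner_sub_left, inner_sub_right,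
    real_inner_smul_left, real_inner_smul_right, real_inner_comm x y]
  ring

namespace ERealAux

lemma mul_ne_bot' {r : ℝ} (hr : 0 < r) {a : EReal} (ha : a ≠ ⊥) : (r : EReal) * a ≠ ⊥ := by
  induction a using EReal.rec with
  | bot => exact absurd rfl ha
  | coe a => rw [← EReal.coe_mul]; exact EReal.coe_ne_bot _
  | top => rw [EReal.coe_mul_top_of_pos hr]; exact (by simp : (⊤:EReal) ≠ ⊥)

lemma mul_coe_add {r : ℝ} (hr : 0 < r) {a b : EReal} (ha : a ≠ ⊥) (hb : b ≠ ⊥) :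
    (r : EReal) * (a + b) = (r : EReal) * a + (r : EReal) * b := by
  induction a using EReal.rec with
  | bot => exact absurd rfl ha
  | coe a =>
    induction b using EReal.rec with
    | bot => exact absurd rfl hb
    | coe b => rw [← EReal.coe_add, ← EReal.coe_mul, ← EReal.coe_mul, ← EReal.coe_mul,
        ← EReal.coe_add, mul_add]
    | top => rw [EReal.coe_add_top, EReal.coe_mul_top_of_pos hr, ← EReal.coe_mul,
        EReal.coe_add_top]
  | top =>
    induction b using EReal.rec with
    | bot => exact absurd rfl hb
    | coe b => rw [EReal.top_add_of_ne_bot (EReal.coe_ne_bot b),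
        EReal.coe_mul_top_of_pos hr, ← EReal.coe_mul,
        EReal.top_add_of_ne_bot (EReal.coe_ne_bot _)]
    | top => rw [EReal.top_add_top, EReal.coe_mul_top_of_pos hr, EReal.top_add_top]

lemma coe_sum {ι : Type*} (s : Finset ι) (F : ι → ℝ) :
    ((∑ i ∈ s, F i : ℝ) : EReal) = ∑ i ∈ s, ((F i : ℝ) : EReal) := by
  induction s using Finset.cons_induction with
  | empty => simp
  | cons i s hi ih => rw [Finset.sum_cons, Finset.sum_cons, EReal.coe_add, ih]

lemma sum_ne_bot {ι : Type*} (s : Finset ι) (F : ι → EReal)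
    (hF : ∀ i ∈ s, F i ≠ ⊥) : ∑ i ∈ s, F i ≠ ⊥ := by
  induction s using Finset.cons_induction with
  | empty => simp
  | cons i s hi ih =>
    rw [Finset.sum_cons]
    intro h
    rcases EReal.add_eq_bot_iff.mp h with h' | h'
    · exact hF i (Finset.mem_cons_self i s) h'
    · exact ih (fun j hj => hF j (Finset.mem_cons_of_mem hj)) h'

lemma mul_sum {ι : Type*} {r : ℝ} (hr : 0 < r) (s : Finset ι) (F : ι → EReal)
    (hF : ∀ i ∈ s, F i ≠ ⊥) :
    (r : EReal) * ∑ i ∈ s, F i = ∑ i ∈ s, (r : EReal) * F i := by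
  induction s using Finset.cons_induction with
  | empty => simp
  | cons i s hi ih =>
    rw [Finset.sum_cons, Finset.sum_cons,
      mul_coe_add hr (hF i (Finset.mem_cons_self i s))
        (sum_ne_bot s F (fun j hj => hF j (Finset.mem_cons_of_mem hj))),
      ih (fun j hj => hF j (Finset.mem_cons_of_mem hj))]

lemma le_sub_coe_of_add_coe_le {a : EReal} {c d : ℝ} (h : a + (c : EReal) ≤ (d : EReal)) :
    a ≤ ((d - c : ℝ) : EReal) := by
  induction a using EReal.rec with
  | bot => exact bot_le
  | coe a =>
    rw [← EReal.coe_add, EReal.coe_le_coe_iff] at h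
    rw [EReal.coe_le_coe_iff]; linarith
  | top => rw [EReal.top_add_of_ne_bot (EReal.coe_ne_bot c)] at h; exact absurd h (by simp)

lemma mul_mono {r : ℝ} (hr : 0 ≤ r) {a b : EReal} (h : a ≤ b) :
    (r : EReal) * a ≤ (r : EReal) * b :=
  mul_le_mul_of_nonneg_left h (EReal.coe_nonneg.mpr hr)

end ERealAux

set_option maxHeartbeats 1000000 in
lemma bddBelow_of_strong (g : H → EReal) (hb : ∀ x, g x ≠ ⊥)
    (hc : ∀ u v : H, g ((1/2 : ℝ) • u + (1/2 : ℝ) • v)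
        + (((1/8) * ‖u - v‖ ^ 2 : ℝ) : EReal)
        ≤ ((1/2 : ℝ) : EReal) * g u + ((1/2 : ℝ) : EReal) * g v)
    (x₀ : H) (a δ : ℝ) (hδ : 0 < δ) (hx₀ : g x₀ = (a : ℝ))
    (hball : ∀ z, ‖z - x₀‖ ≤ δ → ((a - 1 : ℝ) : EReal) ≤ g z) :
    ∃ m : ℝ, ∀ y, (m : EReal) ≤ g y := by
  classical
  set p : ℝ := 2/δ + δ/2 with hp
  refine ⟨a - 1 - p^2/2, ?_⟩
  intro y
  set R := ‖y - x₀‖ with hR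
  by_cases hRδ : R ≤ δ
  · refine le_trans ?_ (hball y hRδ)
    rw [EReal.coe_le_coe_iff]
    nlinarith [sq_nonneg p]
  push_neg at hRδ
  have hR0 : (0:ℝ) < R := hδ.trans hRδ
  rcases eq_or_ne (g y) ⊤ with hgy | hgy
  · rw [hgy]; exact le_top
  obtain ⟨b, hby⟩ : ∃ b : ℝ, g y = (b : ℝ) := ⟨(g y).toReal, (EReal.coe_toReal hgy (hb y)).symm⟩
  have chain : ∀ j : ℕ, g (x₀ + ((2:ℝ)^j)⁻¹ • (y - x₀))
      ≤ ((((2:ℝ)^j)⁻¹ * (b - a) + a - R^2/2 * ((2:ℝ)^j)⁻¹ * (1 - ((2:ℝ)^j)⁻¹) : ℝ) : EReal) := by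
    intro j
    induction j with
    | zero => simp [hby]
    | succ j ih =>
      have hq : (0:ℝ) < 2^j := by positivity
      set e : ℝ := ((2:ℝ)^j)⁻¹ with he
      have he0 : 0 < e := by positivity
      set z : H := x₀ + e • (y - x₀) with hz
      have hmid : (1/2 : ℝ) • x₀ + (1/2 : ℝ) • z = x₀ + ((2:ℝ)^(j+1))⁻¹ • (y - x₀) := by
        rw [hz, pow_succ, mul_comm, mul_inv]
        module
      have hnorm : ‖x₀ - z‖ ^ 2 = (e * R)^2 := by
        rw [hz]
        simp only [sub_add_cancel_left, norm_neg, norm_smul, Real.norm_eq_abs,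
          abs_of_pos he0]
        rw [hR]
      have h1 := hc x₀ z
      rw [hmid, hx₀] at h1
      have h2 : ((1/2:ℝ) : EReal) * g z
          ≤ (((1/2) * (e * (b - a) + a - R^2/2 * e * (1 - e)) : ℝ) : EReal) := by
        refine le_trans (ERealAux.mul_mono (by norm_num) ih) ?_
        rw [← EReal.coe_mul]
      have h3 : g (x₀ + ((2:ℝ)^(j+1))⁻¹ • (y - x₀)) + (((1/8) * ‖x₀ - z‖^2 : ℝ) : EReal)
          ≤ ((a/2 + (1/2) * (e * (b - a) + a - R^2/2 * e * (1 - e)) : ℝ) : EReal) := by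
        refine le_trans h1 (le_trans (add_le_add_right h2 _) ?_)
        rw [← EReal.coe_mul, ← EReal.coe_add, EReal.coe_le_coe_iff]
        ring_nf
        exact le_refl _
      have h4 := ERealAux.le_sub_coe_of_add_coe_le h3
      refine le_trans h4 ?_
      rw [EReal.coe_le_coe_iff, hnorm]
      have hee : ((2:ℝ)^(j+1))⁻¹ = e/2 := by rw [pow_succ, mul_inv, he]; ring
      rw [hee]
      have : (0:ℝ) ≤ (e*R)^2 := sq_nonneg _
      ring_nf
      nlinarith [sq_nonneg (e*R)]
  -- choose k
  obtain ⟨N, hN⟩ : ∃ N : ℕ, R/δ < 2^N := pow_unbounded_of_one_lt (R/δ) one_lt_two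
  have hex : ∃ k : ℕ, R ≤ 2^k * δ := ⟨N, by rw [div_lt_iff₀ hδ] at hN; linarith⟩
  set k := Nat.find hex with hk
  have hkle : R ≤ 2^k * δ := Nat.find_spec hex
  have hk0 : k ≠ 0 := by
    intro h0
    rw [h0] at hkle; simp at hkle; linarith
  have hkmin : ¬ (R ≤ 2^(k-1) * δ) := Nat.find_min hex (Nat.sub_lt (Nat.pos_of_ne_zero hk0) one_pos)
  push_neg at hkmin
  have hq : (0:ℝ) < 2^k := by positivity
  set q : ℝ := 2^k with hqdef
  set e : ℝ := q⁻¹ with he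
  have he0 : 0 < e := by positivity
  have hqe : q * e = 1 := mul_inv_cancel₀ hq.ne'
  have hq2 : q * δ ≤ 2 * R := by
    have : (2:ℝ)^k = 2 * 2^(k-1) := by
      conv_lhs => rw [← Nat.succ_pred_eq_of_pos (Nat.pos_of_ne_zero hk0)]
      rw [pow_succ, Nat.pred_eq_sub_one]; ring
    rw [hqdef, this]; nlinarith
  have heR : e * R ≤ δ := by
    rw [he, inv_mul_le_iff₀ hq]; linarith [hkle]
  -- ball bound at z_k
  have hzk : ((a - 1 : ℝ) : EReal) ≤ g (x₀ + e • (y - x₀)) := by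
    refine hball _ ?_
    have : ‖x₀ + e • (y - x₀) - x₀‖ = e * R := by
      simp only [add_sub_cancel_left, norm_smul, Real.norm_eq_abs, abs_of_pos he0, hR]
    rw [this]; exact heR
  have hchain := chain k
  rw [← hqdef, ← he] at hchain
  have hreal : a - 1 ≤ e * (b - a) + a - R^2/2 * e * (1 - e) := by
    rw [← EReal.coe_le_coe_iff]
    exact le_trans hzk hchain
  rw [hby, EReal.coe_le_coe_iff]
  -- now pure real arithmetic
  have h4 : R^2/2 * e * (1-e) - 1 ≤ e * (b-a) := by linarith
  have h5 : q * (R^2/2 * e * (1-e) - 1) ≤ q * (e * (b-a)) := by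
    exact mul_le_mul_of_nonneg_left h4 hq.le
  have h6 : R^2/2 * (1-e) - q ≤ b - a := by nlinarith [h5, hqe, sq_nonneg R]
  have hre : R^2/2*(1-e) ≥ R^2/2 - R*δ/2 := by nlinarith [heR, hR0, sq_nonneg R]
  have hd2 : (0:ℝ) ≤ δ^2 := sq_nonneg δ
  have h7 : δ^2*R^2/2 - R*δ^3/2 - 2*R*δ ≤ δ^2*(b-a) := by
    nlinarith [mul_le_mul_of_nonneg_left h6 hd2, mul_le_mul_of_nonneg_left hre hd2,
      mul_le_mul_of_nonneg_left hq2 hδ.le]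
  have hp2 : δ^2*p^2 = (2 + δ^2/2)^2 := by rw [hp]; field_simp
  nlinarith [h7, sq_nonneg (δ*R - (2 + δ^2/2)), hp2, hd2, mul_pos hδ hδ]

lemma add_coe_ne_bot {a : EReal} (ha : a ≠ ⊥) (c : ℝ) : a + (c : EReal) ≠ ⊥ := by
  intro h
  rcases EReal.add_eq_bot_iff.mp h with h' | h'
  · exact ha h'
  · exact EReal.coe_ne_bot c h'

lemma gstrong {μ ε : ℝ} (hμ : 0 < μ) (hε : 0 ≤ ε) (F : H → EReal) (hFb : ∀ x, F x ≠ ⊥)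
    (hF : IsEpsConvex ε F) (x y : H) (t : ℝ) (ht0 : 0 < t) (ht1 : t < 1) :
    (((μ:ℝ):EReal) * F ((1-t)•x + t•y) + ((1/2*‖(1-t)•x + t•y‖^2 : ℝ) : EReal))
      + ((t*(1-t)*((μ*ε+1)/2)*‖x-y‖^2 : ℝ) : EReal)
    ≤ ((1-t : ℝ):EReal) * (((μ:ℝ):EReal) * F x + ((1/2*‖x‖^2 : ℝ):EReal))
      + ((t:ℝ):EReal) * (((μ:ℝ):EReal) * F y + ((1/2*‖y‖^2:ℝ):EReal)) := by
  have ht1' : (0:ℝ) < 1 - t := by linarith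
  rcases eq_or_ne (F x) ⊤ with hx | hx
  · have h1 : ((1-t : ℝ):EReal) * (((μ:ℝ):EReal) * F x + ((1/2*‖x‖^2 : ℝ):EReal)) = ⊤ := by
      rw [hx, EReal.mul_top_of_pos (by exact_mod_cast hμ), EReal.top_add_of_ne_bot (EReal.coe_ne_bot _),
        EReal.coe_mul_top_of_pos ht1']
    rw [h1, EReal.top_add_of_ne_bot]
    · exact le_top
    · exact ERealAux.mul_ne_bot' ht0 (add_coe_ne_bot (ERealAux.mul_ne_bot' hμ (hFb y)) _)
  rcases eq_or_ne (F y) ⊤ with hy | hy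
  · have h1 : ((t : ℝ):EReal) * (((μ:ℝ):EReal) * F y + ((1/2*‖y‖^2 : ℝ):EReal)) = ⊤ := by
      rw [hy, EReal.mul_top_of_pos (by exact_mod_cast hμ), EReal.top_add_of_ne_bot (EReal.coe_ne_bot _),
        EReal.coe_mul_top_of_pos ht0]
    rw [h1, EReal.add_top_of_ne_bot]
    · exact le_top
    · exact ERealAux.mul_ne_bot' ht1' (add_coe_ne_bot (ERealAux.mul_ne_bot' hμ (hFb x)) _)
  -- real case
  obtain ⟨rx, hrx⟩ : ∃ r : ℝ, F x = (r : ℝ) := ⟨(F x).toReal, (EReal.coe_toReal hx (hFb x)).symm⟩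
  obtain ⟨ry, hry⟩ : ∃ r : ℝ, F y = (r : ℝ) := ⟨(F y).toReal, (EReal.coe_toReal hy (hFb y)).symm⟩
  have h := hF x y t ht0 ht1
  rw [hrx, hry, ← EReal.coe_mul, ← EReal.coe_mul, ← EReal.coe_add] at h
  have h2 := ERealAux.le_sub_coe_of_add_coe_le h
  have hmtop : F ((1-t)•x + t•y) ≠ ⊤ := by
    intro h'
    rw [h', top_le_iff] at h2
    exact EReal.coe_ne_top _ h2
  obtain ⟨rm, hrm⟩ : ∃ r : ℝ, F ((1-t)•x + t•y) = (r : ℝ) :=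
    ⟨_, (EReal.coe_toReal hmtop (hFb _)).symm⟩
  rw [hrm, EReal.coe_le_coe_iff] at h2
  rw [hrx, hry, hrm]
  rw [← EReal.coe_mul, ← EReal.coe_add, ← EReal.coe_add, ← EReal.coe_mul, ← EReal.coe_add,
    ← EReal.coe_mul, ← EReal.coe_mul, ← EReal.coe_add, ← EReal.coe_mul, ← EReal.coe_add,
    EReal.coe_le_coe_iff]
  have hid := norm_combo_sq x y t
  nlinarith [mul_le_mul_of_nonneg_left h2 hμ.le, sq_nonneg ‖x - y‖, mul_pos ht0 ht1']

lemma hstrong {μ ε lam : ℝ} (hμ : 0 < μ) (hε : 0 ≤ ε) (hlam : 0 < lam)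
    (F : H → EReal) (hFb : ∀ x, F x ≠ ⊥) (hF : IsEpsConvex ε F)
    (x y : H) (t : ℝ) (ht0 : 0 < t) (ht1 : t < 1) :
    ((lam:ℝ):EReal) * (((μ:ℝ):EReal) * F (lam⁻¹ • ((1-t)•x + t•y))
        + ((1/2*‖lam⁻¹ • ((1-t)•x + t•y)‖^2 : ℝ):EReal))
      + ((t*(1-t)*((μ*ε+1)/lam/2)*‖x-y‖^2 : ℝ):EReal)
    ≤ ((1-t:ℝ):EReal) * (((lam:ℝ):EReal) * (((μ:ℝ):EReal) * F (lam⁻¹ • x)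
        + ((1/2*‖lam⁻¹ • x‖^2 : ℝ):EReal)))
      + ((t:ℝ):EReal) * (((lam:ℝ):EReal) * (((μ:ℝ):EReal) * F (lam⁻¹ • y)
        + ((1/2*‖lam⁻¹ • y‖^2 : ℝ):EReal))) := by
  have ht1' : (0:ℝ) < 1 - t := by linarith
  set u := lam⁻¹ • x with hu
  set v := lam⁻¹ • y with hv
  have hmid : lam⁻¹ • ((1-t)•x + t•y) = (1-t)•u + t•v := by
    rw [hu, hv]; module
  have hg := gstrong hμ hε F hFb hF u v t ht0 ht1
  have h1 := ERealAux.mul_mono (le_of_lt hlam) hg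
  -- rewrite LHS of h1
  have hXb : ((μ:ℝ):EReal) * F ((1-t)•u + t•v) + ((1/2*‖(1-t)•u + t•v‖^2 : ℝ):EReal) ≠ ⊥ :=
    add_coe_ne_bot (ERealAux.mul_ne_bot' hμ (hFb _)) _
  rw [ERealAux.mul_coe_add hlam hXb (EReal.coe_ne_bot _)] at h1
  -- rewrite RHS of h1
  have hPb : ((1-t:ℝ):EReal) * (((μ:ℝ):EReal) * F u + ((1/2*‖u‖^2 : ℝ):EReal)) ≠ ⊥ :=
    ERealAux.mul_ne_bot' ht1' (add_coe_ne_bot (ERealAux.mul_ne_bot' hμ (hFb _)) _)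
  have hQb : ((t:ℝ):EReal) * (((μ:ℝ):EReal) * F v + ((1/2*‖v‖^2 : ℝ):EReal)) ≠ ⊥ :=
    ERealAux.mul_ne_bot' ht0 (add_coe_ne_bot (ERealAux.mul_ne_bot' hμ (hFb _)) _)
  rw [ERealAux.mul_coe_add hlam hPb hQb, mul_left_comm ((lam:ℝ):EReal),
    mul_left_comm ((lam:ℝ):EReal)] at h1
  rw [hmid]
  refine le_trans (le_of_eq ?_) (le_trans h1 (le_of_eq ?_))
  · congr 1
    rw [← EReal.coe_mul, EReal.coe_eq_coe_iff]
    have hnuv : ‖u - v‖^2 = (lam⁻¹ * ‖x - y‖)^2 := by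
      rw [hu, hv, ← smul_sub, norm_smul, Real.norm_eq_abs, abs_of_pos (inv_pos.mpr hlam)]
    rw [hnuv]
    field_simp
  · rfl

lemma glow {μ ε : ℝ} (hμ : 0 < μ) (hε : 0 ≤ ε) (F : H → EReal) (hFb : ∀ x, F x ≠ ⊥)
    (hF : IsEpsConvex ε F) (hproper : ∃ x, F x ≠ ⊤) (hlsc : LowerSemicontinuous F) :
    ∃ m : ℝ, ∀ w, (m : EReal) ≤ ((μ:ℝ):EReal) * F w + ((1/2*‖w‖^2 : ℝ):EReal) := by
  set g : H → EReal := fun w => ((μ:ℝ):EReal) * F w + ((1/2*‖w‖^2 : ℝ):EReal) with hg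
  have hgb : ∀ w, g w ≠ ⊥ := fun w => add_coe_ne_bot (ERealAux.mul_ne_bot' hμ (hFb w)) _
  have hc : ∀ u v : H, g ((1/2:ℝ)•u + (1/2:ℝ)•v) + ((1/8*‖u-v‖^2 : ℝ):EReal)
      ≤ ((1/2:ℝ):EReal)*g u + ((1/2:ℝ):EReal)*g v := by
    intro u v
    have h0 := gstrong hμ hε F hFb hF u v (1/2) (by norm_num) (by norm_num)
    have h12 : (1 - (1/2 : ℝ)) = (1/2 : ℝ) := by norm_num
    rw [h12] at h0
    refine le_trans (add_le_add_right ?_ _) h0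
    rw [EReal.coe_le_coe_iff]
    nlinarith [sq_nonneg ‖u-v‖, mul_nonneg (mul_nonneg hμ.le hε) (sq_nonneg ‖u-v‖)]
  obtain ⟨x₀, hx₀⟩ := hproper
  obtain ⟨r₀, hr₀⟩ : ∃ r : ℝ, F x₀ = (r : ℝ) := ⟨_, (EReal.coe_toReal hx₀ (hFb x₀)).symm⟩
  set a : ℝ := μ*r₀ + 1/2*‖x₀‖^2 with ha
  have hgx₀ : g x₀ = (a : EReal) := by
    rw [hg]; simp only [hr₀]; rw [← EReal.coe_mul, ← EReal.coe_add]
  have hlt : ((r₀ - 1/(2*μ) : ℝ) : EReal) < F x₀ := by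
    rw [hr₀, EReal.coe_lt_coe_iff]
    have : 0 < 1/(2*μ) := by positivity
    linarith
  have hev := hlsc x₀ _ hlt
  rcases Metric.eventually_nhds_iff.mp hev with ⟨δ', hδ', hball'⟩
  set δ : ℝ := min (δ'/2) (min 1 (1/(2*‖x₀‖+1))) with hδdef
  have hδ : 0 < δ := by
    have h1 : (0:ℝ) < 2*‖x₀‖+1 := by positivity
    have h2 : (0:ℝ) < 1/(2*‖x₀‖+1) := by positivity
    simp only [hδdef, lt_min_iff]
    refine ⟨by linarith, by norm_num, h2⟩
  have hball : ∀ z, ‖z - x₀‖ ≤ δ → ((a - 1 : ℝ):EReal) ≤ g z := by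
    intro z hz
    have hzδ' : dist z x₀ < δ' := by
      rw [dist_eq_norm]
      have : δ ≤ δ'/2 := min_le_left _ _
      linarith
    have h1 : ((r₀ - 1/(2*μ) : ℝ):EReal) ≤ F z := le_of_lt (hball' hzδ')
    have h2 : ‖x₀‖^2 - 1 ≤ ‖z‖^2 := by
      have hn1 : ‖x₀‖ ≤ ‖z‖ + ‖z - x₀‖ := by
        calc ‖x₀‖ = ‖z - (z - x₀)‖ := by congr 1; abel
        _ ≤ ‖z‖ + ‖z - x₀‖ := norm_sub_le _ _
      have hd1 : δ ≤ 1 := le_trans (min_le_right _ _) (min_le_left _ _)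
      have hd2 : δ * (2*‖x₀‖+1) ≤ 1 := by
        have h3 : δ ≤ 1/(2*‖x₀‖+1) := le_trans (min_le_right _ _) (min_le_right _ _)
        have h4 : (0:ℝ) < 2*‖x₀‖+1 := by positivity
        rw [← le_div_iff₀ h4] at *
        exact h3
      nlinarith [norm_nonneg z, norm_nonneg x₀, norm_nonneg (z - x₀), hz, sq_nonneg (‖z‖ - ‖x₀‖)]
    have h3 : ((μ*(r₀ - 1/(2*μ)) : ℝ):EReal) ≤ ((μ:ℝ):EReal) * F z := by
      rw [EReal.coe_mul]
      exact ERealAux.mul_mono hμ.le h1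
    calc ((a - 1 : ℝ):EReal) ≤ ((μ*(r₀ - 1/(2*μ)) + 1/2*‖z‖^2 : ℝ):EReal) := by
          rw [EReal.coe_le_coe_iff]
          have hμ' : μ * (1/(2*μ)) = 1/2 := by field_simp
          nlinarith [h2, hμ.le]
      _ ≤ g z := by
          rw [EReal.coe_add, hg]
          exact add_le_add_left h3 _
  exact bddBelow_of_strong g hgb hc x₀ a δ hδ hgx₀ hball

set_option maxHeartbeats 2000000 in
/-- Strong convexity is dominant w.r.t. the proximal average: if each `fᵢ` is
proper, lsc and `εᵢ`-convex, then `p_μ(f, λ)` is `ε`-convex with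
`ε = (Σᵢ λᵢ(εᵢ + μ⁻¹)⁻¹)⁻¹ − μ⁻¹`, and `ε > 0` as soon as some `ε_{i₀} > 0`. -/
theorem stmt14 {n : ℕ} (hn : 0 < n) {μ : ℝ} (hμ : 0 < μ) (lam : Fin n → ℝ)
    (hpos : ∀ i, 0 < lam i) (hsum : ∑ i, lam i = 1) (eps : Fin n → ℝ)
    (heps : ∀ i, 0 ≤ eps i) (f : Fin n → H → EReal)
    (hne_bot : ∀ i x, f i x ≠ ⊥) (hproper : ∀ i, ∃ x, f i x ≠ ⊤)
    (hlsc : ∀ i, LowerSemicontinuous (f i))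
    (hconv : ∀ i, IsEpsConvex (eps i) (f i)) :
    IsEpsConvex ((∑ i, lam i * (eps i + μ⁻¹)⁻¹)⁻¹ - μ⁻¹) (proxAvg μ lam f) ∧
    ((∃ i₀, 0 < eps i₀) → 0 < (∑ i, lam i * (eps i + μ⁻¹)⁻¹)⁻¹ - μ⁻¹) := by
  classical
  have hμ' : (0:ℝ) < μ⁻¹ := inv_pos.mpr hμ
  have hσpos : ∀ i, (0:ℝ) < μ * eps i + 1 := fun i => by nlinarith [mul_nonneg hμ.le (heps i)]
  have hepspos : ∀ i, (0:ℝ) < eps i + μ⁻¹ := fun i => by have := heps i; linarith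
  set Sσ : ℝ := ∑ i, lam i * (μ * eps i + 1)⁻¹ with hSσ
  have hSσpos : 0 < Sσ :=
    Finset.sum_pos (fun i _ => mul_pos (hpos i) (inv_pos.mpr (hσpos i)))
      ⟨⟨0, hn⟩, Finset.mem_univ _⟩
  set c : ℝ := Sσ⁻¹ with hcdef
  have hcpos : 0 < c := inv_pos.mpr hSσpos
  have hepsEq : (∑ i, lam i * (eps i + μ⁻¹)⁻¹) = μ * Sσ := by
    rw [hSσ, Finset.mul_sum]
    refine Finset.sum_congr rfl (fun i _ => ?_)
    have h1 : eps i + μ⁻¹ = (μ * eps i + 1)/μ := by field_simp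
    rw [h1, inv_div]
    field_simp
  have hstmt : (∑ i, lam i * (eps i + μ⁻¹)⁻¹)⁻¹ = μ⁻¹ * c := by
    rw [hepsEq, mul_inv, hcdef]
  constructor
  · -- main part
    set F : Fin n → H → EReal := fun i w =>
      ((lam i : ℝ) : EReal) * (((μ : ℝ) : EReal) * f i ((lam i)⁻¹ • w)
        + ((1 / 2 * ‖(lam i)⁻¹ • w‖ ^ 2 : ℝ) : EReal)) with hFdef
    set S : H → Set EReal := fun x =>
      {v : EReal | ∃ xs : Fin n → H, (∑ i, xs i) = x ∧ v = ∑ i, F i (xs i)} with hSdef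
    set G : H → EReal := fun x => sInf (S x) with hGdef
    have hpa : ∀ x, proxAvg μ lam f x
        = ((μ⁻¹ : ℝ) : EReal) * (((-(1 / 2 * ‖x‖ ^ 2) : ℝ) : EReal) + G x) := fun _ => rfl
    have hFb : ∀ i w, F i w ≠ ⊥ := fun i w =>
      ERealAux.mul_ne_bot' (hpos i) (add_coe_ne_bot (ERealAux.mul_ne_bot' hμ (hne_bot i _)) _)
    obtain ⟨m, hm⟩ : ∃ m : Fin n → ℝ, ∀ i w,
        ((m i : ℝ) : EReal) ≤ ((μ:ℝ):EReal) * f i w + ((1/2*‖w‖^2 : ℝ):EReal) := by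
      have h := fun i => glow hμ (heps i) (f i) (hne_bot i) (hconv i) (hproper i) (hlsc i)
      choose m hm using h
      exact ⟨m, hm⟩
    have hFlow : ∀ i w, ((lam i * m i : ℝ) : EReal) ≤ F i w := by
      intro i w
      rw [EReal.coe_mul, hFdef]
      exact ERealAux.mul_mono (hpos i).le (hm i _)
    set M : ℝ := ∑ i, lam i * m i with hM
    have hsumlow : ∀ xs : Fin n → H, ((M : ℝ) : EReal) ≤ ∑ i, F i (xs i) := by
      intro xs
      rw [hM, ERealAux.coe_sum]
      exact Finset.sum_le_sum (fun i _ => hFlow i (xs i))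
    have hGlow : ∀ x, ((M : ℝ) : EReal) ≤ G x := by
      intro x
      refine le_sInf ?_
      rintro v ⟨xs, -, rfl⟩
      exact hsumlow xs
    have hGb : ∀ x, G x ≠ ⊥ := by
      intro x h
      have := hGlow x
      rw [h] at this
      exact absurd this (by simp)
    -- key inequality
    have key : ∀ (x y : H) (t : ℝ), 0 < t → t < 1 → ∀ vx ∈ S x, ∀ vy ∈ S y,
        G ((1-t)•x + t•y) + ((t*(1-t)*(c/2)*‖x-y‖^2 : ℝ) : EReal)
          ≤ ((1-t:ℝ):EReal) * vx + ((t:ℝ):EReal) * vy := by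
      rintro x y t ht0 ht1 vx ⟨xs, hxs, rfl⟩ vy ⟨ys, hys, rfl⟩
      have ht1' : (0:ℝ) < 1 - t := by linarith
      set zs : Fin n → H := fun i => (1-t) • xs i + t • ys i with hzs
      have hzsum : (∑ i, zs i) = (1-t)•x + t•y := by
        rw [hzs, Finset.sum_add_distrib, ← Finset.smul_sum, ← Finset.smul_sum, hxs, hys]
      have hGle : G ((1-t)•x + t•y) ≤ ∑ i, F i (zs i) := sInf_le ⟨zs, hzsum, rfl⟩
      have hper : ∀ i, F i (zs i)
            + ((t*(1-t)*((μ*eps i+1)/(lam i)/2)*‖xs i - ys i‖^2 : ℝ) : EReal)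
          ≤ ((1-t:ℝ):EReal) * F i (xs i) + ((t:ℝ):EReal) * F i (ys i) := by
        intro i
        exact hstrong hμ (heps i) (hpos i) (f i) (hne_bot i) (hconv i) (xs i) (ys i) t ht0 ht1
      -- Cauchy-Schwarz
      have hCS : t*(1-t)*(c/2)*‖x-y‖^2
          ≤ ∑ i, t*(1-t)*((μ*eps i+1)/(lam i)/2)*‖xs i - ys i‖^2 := by
        set d : Fin n → H := fun i => xs i - ys i with hd
        have hdsum : (∑ i, d i) = x - y := by
          rw [hd, Finset.sum_sub_distrib, hxs, hys]
        have h1 : ‖x - y‖ ≤ ∑ i, ‖d i‖ := by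
          rw [← hdsum]
          exact norm_sum_le _ _
        have h2 : (∑ i, ‖d i‖)^2 ≤ Sσ * (∑ i, ((μ*eps i+1)/(lam i)) * ‖d i‖^2) := by
          have h3 := Finset.sum_mul_sq_le_sq_mul_sq Finset.univ
            (fun i => Real.sqrt (lam i * (μ * eps i + 1)⁻¹))
            (fun i => Real.sqrt ((μ * eps i + 1)/(lam i)) * ‖d i‖)
          have h4 : ∀ i : Fin n, Real.sqrt (lam i * (μ * eps i + 1)⁻¹)
              * (Real.sqrt ((μ * eps i + 1)/(lam i)) * ‖d i‖) = ‖d i‖ := by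
            intro i
            rw [← mul_assoc, ← Real.sqrt_mul (mul_nonneg (hpos i).le (inv_nonneg.mpr (hσpos i).le))]
            have h5 : lam i * (μ * eps i + 1)⁻¹ * ((μ * eps i + 1)/(lam i)) = 1 := by
              field_simp [(hpos i).ne', (hσpos i).ne']
            rw [h5, Real.sqrt_one, one_mul]
          have h6 : ∀ i : Fin n, Real.sqrt (lam i * (μ * eps i + 1)⁻¹)^2
              = lam i * (μ * eps i + 1)⁻¹ := fun i => Real.sq_sqrt (mul_nonneg (hpos i).le (inv_nonneg.mpr (hσpos i).le))
          have h7 : ∀ i : Fin n, (Real.sqrt ((μ * eps i + 1)/(lam i)) * ‖d i‖)^2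
              = ((μ * eps i + 1)/(lam i)) * ‖d i‖^2 := by
            intro i
            rw [mul_pow, Real.sq_sqrt (div_nonneg (hσpos i).le (hpos i).le)]
          simp only [h4, h6, h7] at h3
          exact h3
        have h8 : ‖x - y‖^2 ≤ Sσ * (∑ i, ((μ*eps i+1)/(lam i)) * ‖d i‖^2) := by
          refine le_trans ?_ h2
          have := norm_nonneg (x - y)
          nlinarith [h1, Finset.sum_nonneg (fun i (_ : i ∈ Finset.univ) => norm_nonneg (d i))]
        have h9 : c * ‖x - y‖^2 ≤ ∑ i, ((μ*eps i+1)/(lam i)) * ‖d i‖^2 := by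
          have h10 := mul_le_mul_of_nonneg_left h8 hcpos.le
          rw [← mul_assoc, hcdef, inv_mul_cancel₀ hSσpos.ne', one_mul] at h10
          rw [← hcdef] at h10
          exact h10
        calc t*(1-t)*(c/2)*‖x-y‖^2
            = (t*(1-t)/2) * (c * ‖x-y‖^2) := by ring
          _ ≤ (t*(1-t)/2) * (∑ i, ((μ*eps i+1)/(lam i)) * ‖d i‖^2) := by
              have := mul_pos ht0 ht1'
              exact mul_le_mul_of_nonneg_left h9 (by positivity)
          _ = ∑ i, t*(1-t)*((μ*eps i+1)/(lam i)/2)*‖d i‖^2 := by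
              rw [Finset.mul_sum]
              exact Finset.sum_congr rfl (fun i _ => by ring)
      calc G ((1-t)•x + t•y) + ((t*(1-t)*(c/2)*‖x-y‖^2 : ℝ) : EReal)
          ≤ (∑ i, F i (zs i)) + ((t*(1-t)*(c/2)*‖x-y‖^2 : ℝ) : EReal) :=
            add_le_add_left hGle _
        _ ≤ (∑ i, F i (zs i))
            + ((∑ i, t*(1-t)*((μ*eps i+1)/(lam i)/2)*‖xs i - ys i‖^2 : ℝ) : EReal) :=
            add_le_add_right (EReal.coe_le_coe_iff.mpr hCS) _
        _ = ∑ i, (F i (zs i)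
            + ((t*(1-t)*((μ*eps i+1)/(lam i)/2)*‖xs i - ys i‖^2 : ℝ) : EReal)) := by
            rw [Finset.sum_add_distrib, ERealAux.coe_sum]
        _ ≤ ∑ i, (((1-t:ℝ):EReal) * F i (xs i) + ((t:ℝ):EReal) * F i (ys i)) :=
            Finset.sum_le_sum (fun i _ => hper i)
        _ = ((1-t:ℝ):EReal) * (∑ i, F i (xs i)) + ((t:ℝ):EReal) * (∑ i, F i (ys i)) := by
            rw [Finset.sum_add_distrib, ERealAux.mul_sum ht1' _ _ (fun i _ => hFb i _),
              ERealAux.mul_sum ht0 _ _ (fun i _ => hFb i _)]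
    -- conclude
    intro x y t ht0 ht1
    have ht1' : (0:ℝ) < 1 - t := by linarith
    rcases eq_or_ne (G x) ⊤ with hGx | hGx
    · have h1 : proxAvg μ lam f x = ⊤ := by
        rw [hpa x, hGx, EReal.coe_add_top, EReal.coe_mul_top_of_pos hμ']
      have h2 : ((t:ℝ):EReal) * proxAvg μ lam f y ≠ ⊥ := by
        rw [hpa y]
        refine ERealAux.mul_ne_bot' ht0 (ERealAux.mul_ne_bot' hμ' ?_)
        rw [add_comm]
        exact add_coe_ne_bot (hGb y) _
      rw [h1, EReal.coe_mul_top_of_pos ht1', EReal.top_add_of_ne_bot h2]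
      exact le_top
    rcases eq_or_ne (G y) ⊤ with hGy | hGy
    · have h1 : proxAvg μ lam f y = ⊤ := by
        rw [hpa y, hGy, EReal.coe_add_top, EReal.coe_mul_top_of_pos hμ']
      have h2 : ((1-t:ℝ):EReal) * proxAvg μ lam f x ≠ ⊥ := by
        rw [hpa x]
        refine ERealAux.mul_ne_bot' ht1' (ERealAux.mul_ne_bot' hμ' ?_)
        rw [add_comm]
        exact add_coe_ne_bot (hGb x) _
      rw [h1, EReal.coe_mul_top_of_pos ht0, EReal.add_top_of_ne_bot h2]
      exact le_top
    obtain ⟨gx, hgx⟩ : ∃ r : ℝ, G x = (r : ℝ) := ⟨_, (EReal.coe_toReal hGx (hGb x)).symm⟩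
    obtain ⟨gy, hgy⟩ : ∃ r : ℝ, G y = (r : ℝ) := ⟨_, (EReal.coe_toReal hGy (hGb y)).symm⟩
    have hmainη : ∀ η : ℝ, 0 < η → G ((1-t)•x + t•y)
        ≤ (((1-t)*gx + t*gy + η - t*(1-t)*(c/2)*‖x-y‖^2 : ℝ) : EReal) := by
      intro η hη
      obtain ⟨vx, hvxS, hvxlt⟩ : ∃ a ∈ S x, a < ((gx + η/2 : ℝ) : EReal) := by
        refine sInf_lt_iff.mp ?_
        rw [show sInf (S x) = G x from rfl, hgx, EReal.coe_lt_coe_iff]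
        linarith
      obtain ⟨vy, hvyS, hvylt⟩ : ∃ a ∈ S y, a < ((gy + η/2 : ℝ) : EReal) := by
        refine sInf_lt_iff.mp ?_
        rw [show sInf (S y) = G y from rfl, hgy, EReal.coe_lt_coe_iff]
        linarith
      have hvxb : vx ≠ ⊥ := by
        rintro rfl
        obtain ⟨xs, -, h⟩ := hvxS
        exact absurd (h ▸ hsumlow xs) (by simp)
      have hvyb : vy ≠ ⊥ := by
        rintro rfl
        obtain ⟨ys, -, h⟩ := hvyS
        exact absurd (h ▸ hsumlow ys) (by simp)
      obtain ⟨ra, hra⟩ : ∃ r : ℝ, vx = (r : ℝ) :=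
        ⟨_, (EReal.coe_toReal (fun h => by rw [h] at hvxlt; exact absurd hvxlt (by simp)) hvxb).symm⟩
      obtain ⟨rb, hrb⟩ : ∃ r : ℝ, vy = (r : ℝ) :=
        ⟨_, (EReal.coe_toReal (fun h => by rw [h] at hvylt; exact absurd hvylt (by simp)) hvyb).symm⟩
      rw [hra, EReal.coe_lt_coe_iff] at hvxlt
      rw [hrb, EReal.coe_lt_coe_iff] at hvylt
      have hk := key x y t ht0 ht1 vx hvxS vy hvyS
      rw [hra, hrb, ← EReal.coe_mul, ← EReal.coe_mul, ← EReal.coe_add] at hk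
      have hk2 := ERealAux.le_sub_coe_of_add_coe_le hk
      refine le_trans hk2 ?_
      rw [EReal.coe_le_coe_iff]
      nlinarith [hvxlt, hvylt, ht0, ht1']
    have hGmtop : G ((1-t)•x + t•y) ≠ ⊤ := by
      intro h
      have := hmainη 1 one_pos
      rw [h] at this
      rw [top_le_iff] at this
      exact EReal.coe_ne_top _ this
    obtain ⟨gm, hgm⟩ : ∃ r : ℝ, G ((1-t)•x + t•y) = (r : ℝ) :=
      ⟨_, (EReal.coe_toReal hGmtop (hGb _)).symm⟩
    have hgmle : gm + t*(1-t)*(c/2)*‖x-y‖^2 ≤ (1-t)*gx + t*gy := by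
      have h := le_of_forall_pos_le_add (a := gm) (b := (1-t)*gx + t*gy - t*(1-t)*(c/2)*‖x-y‖^2) ?_
      · linarith
      · intro η hη
        have := hmainη η hη
        rw [hgm, EReal.coe_le_coe_iff] at this
        linarith
    -- final
    rw [hpa, hpa, hpa, hgx, hgy, hgm, hstmt]
    norm_cast
    have hid : μ⁻¹ * ‖(1-t)•x+t•y‖^2
        = μ⁻¹ * ((1-t)*‖x‖^2 + t*‖y‖^2 - t*(1-t)*‖x-y‖^2) := by
      rw [norm_combo_sq]
    have hgm2 : μ⁻¹ * (gm + t*(1-t)*(c/2)*‖x-y‖^2) ≤ μ⁻¹ * ((1-t)*gx + t*gy) :=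
      mul_le_mul_of_nonneg_left hgmle hμ'.le
    linarith [hid, hgm2]
  · rintro ⟨i₀, hi₀⟩
    set T : ℝ := ∑ i, lam i * (eps i + μ⁻¹)⁻¹ with hT
    have hTpos : 0 < T :=
      Finset.sum_pos (fun i _ => mul_pos (hpos i) (inv_pos.mpr (hepspos i)))
        ⟨⟨0, hn⟩, Finset.mem_univ _⟩
    have hTlt : T < μ := by
      have h1 : ∀ i ∈ Finset.univ, lam i * (eps i + μ⁻¹)⁻¹ ≤ lam i * μ := by
        intro i _
        refine mul_le_mul_of_nonneg_left ?_ (hpos i).le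
        have h := inv_anti₀ hμ' (le_add_of_nonneg_left (heps i) : μ⁻¹ ≤ eps i + μ⁻¹)
        rwa [inv_inv] at h
      have h2 : lam i₀ * (eps i₀ + μ⁻¹)⁻¹ < lam i₀ * μ := by
        refine mul_lt_mul_of_pos_left ?_ (hpos i₀)
        have h := inv_strictAnti₀ hμ' (lt_add_of_pos_left μ⁻¹ hi₀ : μ⁻¹ < eps i₀ + μ⁻¹)
        rwa [inv_inv] at h
      have h3 := Finset.sum_lt_sum h1 ⟨i₀, Finset.mem_univ i₀, h2⟩
      calc T < ∑ i, lam i * μ := h3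
        _ = μ := by rw [← Finset.sum_mul, hsum, one_mul]
    have : μ⁻¹ < T⁻¹ := inv_strictAnti₀ hTpos hTlt
    linarith
end

section
/- Let A be a real n × n matrix that is monotone, i.e., ⟨x, Ax⟩ ≥ 0 for every x ∈ ℝⁿ. Then for every real λ with 0 ≤ λ < 1, det(λA + (1−λ)I) > 0, where I is the identity matrix. Consequently, det A ≥ 0. -/
/-!
A real matrix `M` whose quadratic form is positive definite, symmetric or not, has positive
determinant: along the segment `s • M + (1 - s) • 1` the form stays positive definite, so no
nonzero vector lies in the kernel, the determinant never vanishes, and it keeps the sign of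
`det 1 = 1`. For monotone `A` and `t < 1` the form of `t • A + (1 - t) • 1` is
`t ⟨x, A x⟩ + (1 - t) ‖x‖²`, which is positive definite; `det A ≥ 0` follows by letting `t → 1`.
-/

open Matrix Set

namespace Matrix

variable {ι : Type*} [Fintype ι]

lemma dotProduct_self_pos {x : ι → ℝ} (hx : x ≠ 0) : 0 < x ⬝ᵥ x := by
  simpa using dotProduct_star_self_pos_iff.2 hx

variable [DecidableEq ι]

lemma dotProduct_mulVec_smul_add_smul_one (A : Matrix ι ι ℝ) (t : ℝ) (x : ι → ℝ) :
    x ⬝ᵥ (t • A + (1 - t) • 1) *ᵥ x = t * (x ⬝ᵥ A *ᵥ x) + (1 - t) * (x ⬝ᵥ x) := by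
  simp only [add_mulVec, smul_mulVec, one_mulVec, dotProduct_add, dotProduct_smul, smul_eq_mul]

lemma det_ne_zero_of_dotProduct_mulVec_pos {M : Matrix ι ι ℝ}
    (hM : ∀ x ≠ 0, 0 < x ⬝ᵥ M *ᵥ x) : M.det ≠ 0 := by
  intro hdet
  obtain ⟨x, hx, hMx⟩ := exists_mulVec_eq_zero_iff.2 hdet
  simpa [hMx] using hM x hx

lemma continuous_det_smul_add_smul_one (A : Matrix ι ι ℝ) :
    Continuous fun t : ℝ => (t • A + (1 - t) • (1 : Matrix ι ι ℝ)).det :=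
  Continuous.matrix_det (by fun_prop)

theorem det_pos_of_dotProduct_mulVec_pos {M : Matrix ι ι ℝ}
    (hM : ∀ x ≠ 0, 0 < x ⬝ᵥ M *ᵥ x) : 0 < M.det := by
  have hne : ∀ s ∈ Icc (0 : ℝ) 1, (s • M + (1 - s) • (1 : Matrix ι ι ℝ)).det ≠ 0 := by
    rintro s ⟨hs0, hs1⟩
    refine det_ne_zero_of_dotProduct_mulVec_pos fun x hx => ?_
    have hMx := hM x hx
    have hxx := dotProduct_self_pos hx
    rw [dotProduct_mulVec_smul_add_smul_one]
    rcases hs0.eq_or_lt with rfl | hs0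
    · simpa using hxx
    · linarith [mul_pos hs0 hMx, mul_nonneg (sub_nonneg.2 hs1) hxx.le]
  by_contra! hdet
  obtain ⟨s, hs, hs0⟩ := intermediate_value_Icc' zero_le_one
    (continuous_det_smul_add_smul_one M).continuousOn
    (show (0 : ℝ) ∈ Icc _ _ by simp [hdet])
  exact hne s hs hs0

end Matrix

/-- If a real `n × n` matrix `A` is monotone (`⟨x, Ax⟩ ≥ 0` for all `x`), then
`det(λA + (1 − λ)I) > 0` for `0 ≤ λ < 1`, and consequently `det A ≥ 0`. -/
theorem stmt18 {n : ℕ} (A : Matrix (Fin n) (Fin n) ℝ)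
    (hA : ∀ x : Fin n → ℝ, 0 ≤ x ⬝ᵥ A.mulVec x) :
    (∀ t : ℝ, 0 ≤ t → t < 1 →
      0 < (t • A + (1 - t) • (1 : Matrix (Fin n) (Fin n) ℝ)).det) ∧
    0 ≤ A.det := by
  have hpos : ∀ t : ℝ, 0 ≤ t → t < 1 →
      0 < (t • A + (1 - t) • (1 : Matrix (Fin n) (Fin n) ℝ)).det := by
    intro t ht0 ht1
    refine det_pos_of_dotProduct_mulVec_pos fun x hx => ?_
    rw [dotProduct_mulVec_smul_add_smul_one]
    have := mul_nonneg ht0 (hA x)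
    have := mul_pos (sub_pos.2 ht1) (dotProduct_self_pos hx)
    linarith
  refine ⟨hpos, ?_⟩
  have hclosed :=
    isClosed_le (continuous_const (y := (0 : ℝ))) (continuous_det_smul_add_smul_one A)
  have hIcc : Icc (0 : ℝ) 1 ⊆ {t | 0 ≤ (t • A + (1 - t) • 1).det} := by
    rw [← closure_Ico zero_ne_one, hclosed.closure_subset_iff]
    exact fun t ht => (hpos t ht.1 ht.2).le
  simpa using hIcc (right_mem_Icc.2 zero_le_one)
end

section
/- Let I = {1,...,n}, and for each i ∈ I let λ_i > 0 with Σ_{i∈I} λ_i = 1 and let A_i be a real N × N matrix that is both monotone (⟨x, A_i x⟩ ≥ 0 for all x ∈ ℝᴺ) and orthogonal (A_iᵀ A_i = I). Then each A_i satisfies det A_i = 1; the matrices A_i + I are invertible; the matrix Σ_{i∈I} λ_i (A_i + I)⁻¹ is invertible; and the resolvent average R(A, λ) = (Σ_{i∈I} λ_i (A_i + I)⁻¹)⁻¹ − I is monotone and orthogonal with det R(A, λ) = 1. -/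
/-!
Write `J = (A + 1)⁻¹` for the resolvent of `A`, so that `A = J⁻¹ - 1`. Under this correspondence
`A` is monotone iff `J` is firmly nonexpansive (`‖J x‖² ≤ ⟪x, J x⟫`), and `A` is orthogonal iff
`J + Jᵀ = 1`. Both properties of `J` are stable under convex combinations: the first by convexity
of `‖·‖²`, the second because it is affine. Hence the averaged resolvent `B = ∑ λᵢ Jᵢ` again
corresponds to a monotone orthogonal matrix `B⁻¹ - 1`; it is invertible since `⟪x, B x⟫ = ‖x‖² / 2`.
Finally `Aᵀ (A + 1) = (A + 1)ᵀ` forces `det A = 1` as soon as `A + 1` is invertible.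
-/

open Matrix

namespace Matrix

section Order

variable {m 𝕜 : Type*} [Fintype m] [Field 𝕜] [LinearOrder 𝕜] [IsStrictOrderedRing 𝕜]

def IsMonotone (A : Matrix m m 𝕜) : Prop :=
  ∀ x, 0 ≤ x ⬝ᵥ A *ᵥ x

def IsFirmlyNonexpansive (J : Matrix m m 𝕜) : Prop :=
  ∀ x, J *ᵥ x ⬝ᵥ J *ᵥ x ≤ x ⬝ᵥ J *ᵥ x

theorem dotProduct_self_pos_s19 {v : m → 𝕜} (hv : v ≠ 0) : 0 < v ⬝ᵥ v :=
  (Finset.sum_nonneg fun i _ => mul_self_nonneg (v i)).lt_of_ne'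
    (dotProduct_self_eq_zero.not.mpr hv)

theorem sum_smul_dotProduct_self_le {ι : Type*} {s : Finset ι} {w : ι → 𝕜}
    (hw₀ : ∀ i ∈ s, 0 ≤ w i) (hw₁ : ∑ i ∈ s, w i = 1) (v : ι → m → 𝕜) :
    (∑ i ∈ s, w i • v i) ⬝ᵥ (∑ i ∈ s, w i • v i) ≤ ∑ i ∈ s, w i * (v i ⬝ᵥ v i) := by
  simp only [dotProduct, Finset.mul_sum, ← sq]
  rw [Finset.sum_comm]
  refine Finset.sum_le_sum fun j _ => ?_
  simpa only [Finset.sum_apply, Pi.smul_apply, smul_eq_mul] using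
    even_two.convexOn_pow.map_sum_le hw₀ hw₁ fun i _ => Set.mem_univ (v i j)

theorem IsFirmlyNonexpansive.sum_smul {ι : Type*} {s : Finset ι} {w : ι → 𝕜}
    {J : ι → Matrix m m 𝕜} (hw₀ : ∀ i ∈ s, 0 ≤ w i) (hw₁ : ∑ i ∈ s, w i = 1)
    (hJ : ∀ i ∈ s, (J i).IsFirmlyNonexpansive) :
    (∑ i ∈ s, w i • J i).IsFirmlyNonexpansive := by
  intro x
  have hmul : (∑ i ∈ s, w i • J i) *ᵥ x = ∑ i ∈ s, w i • (J i *ᵥ x) := by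
    simp only [sum_mulVec, smul_mulVec]
  calc (∑ i ∈ s, w i • J i) *ᵥ x ⬝ᵥ (∑ i ∈ s, w i • J i) *ᵥ x
      ≤ ∑ i ∈ s, w i * (J i *ᵥ x ⬝ᵥ J i *ᵥ x) := hmul ▸ sum_smul_dotProduct_self_le hw₀ hw₁ _
    _ ≤ ∑ i ∈ s, w i * (x ⬝ᵥ J i *ᵥ x) :=
        Finset.sum_le_sum fun i hi => mul_le_mul_of_nonneg_left (hJ i hi x) (hw₀ i hi)
    _ = x ⬝ᵥ (∑ i ∈ s, w i • J i) *ᵥ x := by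
        simp only [hmul, dotProduct_sum, dotProduct_smul, smul_eq_mul]

variable [DecidableEq m]

omit [IsStrictOrderedRing 𝕜] in
theorem isUnit_of_dotProduct_mulVec_pos {M : Matrix m m 𝕜}
    (h : ∀ x ≠ 0, 0 < x ⬝ᵥ M *ᵥ x) : IsUnit M := by
  refine mulVec_injective_iff_isUnit.mp fun x y hxy => by_contra fun hne => ?_
  have hpos := h (x - y) (sub_ne_zero.mpr hne)
  rw [mulVec_sub, hxy, sub_self, dotProduct_zero] at hpos
  exact hpos.false

theorem IsMonotone.isUnit_add_one {A : Matrix m m 𝕜} (hA : A.IsMonotone) : IsUnit (A + 1) :=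
  isUnit_of_dotProduct_mulVec_pos fun x hx => by
    rw [add_mulVec, one_mulVec, dotProduct_add]
    exact add_pos_of_nonneg_of_pos (hA x) (dotProduct_self_pos_s19 hx)

theorem isUnit_of_add_transpose_eq_one {J : Matrix m m 𝕜} (hJ : J + Jᵀ = 1) : IsUnit J :=
  isUnit_of_dotProduct_mulVec_pos fun x hx => by
    have h : x ⬝ᵥ (J + Jᵀ) *ᵥ x = 2 * (x ⬝ᵥ J *ᵥ x) := by
      rw [add_mulVec, dotProduct_add, dotProduct_transpose_mulVec, two_mul]
    rw [hJ, one_mulVec] at h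
    linarith [dotProduct_self_pos_s19 hx]

theorem isMonotone_inv_sub_one_iff {J : Matrix m m 𝕜} (hJ : IsUnit J) :
    (J⁻¹ - 1).IsMonotone ↔ J.IsFirmlyNonexpansive := by
  have hquad : ∀ z, J *ᵥ z ⬝ᵥ (J⁻¹ - 1) *ᵥ (J *ᵥ z) = z ⬝ᵥ J *ᵥ z - J *ᵥ z ⬝ᵥ J *ᵥ z := by
    intro z
    rw [sub_mulVec, one_mulVec, mulVec_mulVec, nonsing_inv_mul _ ((isUnit_iff_isUnit_det J).mp hJ),
      one_mulVec, dotProduct_sub, dotProduct_comm]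
  unfold IsMonotone IsFirmlyNonexpansive
  rw [(mulVec_surjective_iff_isUnit.mpr hJ).forall]
  simp only [hquad, sub_nonneg]

end Order

section Algebra

variable {m R : Type*} [Fintype m] [DecidableEq m] [CommRing R]

theorem transpose_mul_self_inv_sub_one_iff {J : Matrix m m R} (hJ : IsUnit J) :
    (J⁻¹ - 1)ᵀ * (J⁻¹ - 1) = 1 ↔ J + Jᵀ = 1 := by
  have hdet := (isUnit_iff_isUnit_det J).mp hJ
  have hright : (J⁻¹ - 1) * J = 1 - J := by
    rw [sub_mul, nonsing_inv_mul _ hdet, one_mul]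
  have hleft : Jᵀ * (J⁻¹ - 1)ᵀ = 1 - Jᵀ := by
    rw [← transpose_mul, hright, transpose_sub, transpose_one]
  rw [← ((isUnit_transpose J).mpr hJ).mul_right_inj, ← hJ.mul_left_inj, mul_one,
    show Jᵀ * ((J⁻¹ - 1)ᵀ * (J⁻¹ - 1)) * J = (Jᵀ * (J⁻¹ - 1)ᵀ) * ((J⁻¹ - 1) * J) by
      simp only [mul_assoc],
    hleft, hright,
    show (1 - Jᵀ) * (1 - J) = (1 - (J + Jᵀ)) + Jᵀ * J by noncomm_ring,
    add_eq_right, sub_eq_zero, eq_comm]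

omit [Fintype m] in
theorem add_transpose_sum_smul_eq_one {ι : Type*} {s : Finset ι} {w : ι → R}
    (hw : ∑ i ∈ s, w i = 1) {J : ι → Matrix m m R} (hJ : ∀ i ∈ s, J i + (J i)ᵀ = 1) :
    ∑ i ∈ s, w i • J i + (∑ i ∈ s, w i • J i)ᵀ = 1 := by
  rw [transpose_sum, ← Finset.sum_add_distrib]
  simp only [transpose_smul, ← smul_add]
  rw [Finset.sum_congr rfl fun i hi => congrArg (w i • ·) (hJ i hi), ← Finset.sum_smul, hw,
    one_smul]

theorem det_eq_one_of_transpose_mul_self_eq_one {A : Matrix m m R} (hA : Aᵀ * A = 1)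
    (hA₁ : IsUnit (A + 1)) : A.det = 1 := by
  have h : Aᵀ * (A + 1) = (A + 1)ᵀ := by
    rw [mul_add, hA, mul_one, transpose_add, transpose_one, add_comm]
  have hdet := congrArg det h
  rw [det_mul, det_transpose, det_transpose] at hdet
  exact ((isUnit_iff_isUnit_det _).mp hA₁).mul_eq_right.mp hdet

end Algebra

end Matrix

theorem stmt19_general {N n : ℕ} (lam : Fin n → ℝ) (hpos : ∀ i, 0 < lam i)
    (hsum : ∑ i, lam i = 1) (A : Fin n → Matrix (Fin N) (Fin N) ℝ)
    (hmono : ∀ i, ∀ x : Fin N → ℝ, 0 ≤ x ⬝ᵥ (A i).mulVec x)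
    (horth : ∀ i, (A i)ᵀ * A i = 1) :
    (∀ i, (A i).det = 1) ∧
    (∀ i, IsUnit (A i + 1)) ∧
    IsUnit (∑ i, lam i • (A i + 1)⁻¹) ∧
    (∀ x : Fin N → ℝ,
      0 ≤ x ⬝ᵥ ((∑ i, lam i • (A i + 1)⁻¹)⁻¹ - 1).mulVec x) ∧
    ((∑ i, lam i • (A i + 1)⁻¹)⁻¹ - 1)ᵀ * ((∑ i, lam i • (A i + 1)⁻¹)⁻¹ - 1) = 1 ∧
    ((∑ i, lam i • (A i + 1)⁻¹)⁻¹ - 1).det = 1 := by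
  have hunit i : IsUnit (A i + 1) := IsMonotone.isUnit_add_one (hmono i)
  have hJunit i : IsUnit (A i + 1)⁻¹ := isUnit_nonsing_inv_iff.mpr (hunit i)
  have hJinv i : ((A i + 1)⁻¹)⁻¹ - 1 = A i := by
    rw [nonsing_inv_nonsing_inv _ ((isUnit_iff_isUnit_det _).mp (hunit i)), add_sub_cancel_right]
  set B := ∑ i, lam i • (A i + 1)⁻¹
  have hB : B + Bᵀ = 1 := add_transpose_sum_smul_eq_one hsum fun i _ =>
    (transpose_mul_self_inv_sub_one_iff (hJunit i)).mp (by rw [hJinv]; exact horth i)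
  have hBunit : IsUnit B := isUnit_of_add_transpose_eq_one hB
  have hBorth : (B⁻¹ - 1)ᵀ * (B⁻¹ - 1) = 1 := (transpose_mul_self_inv_sub_one_iff hBunit).mpr hB
  have hBmono : (B⁻¹ - 1).IsMonotone := (isMonotone_inv_sub_one_iff hBunit).mpr <|
    IsFirmlyNonexpansive.sum_smul (fun i _ => (hpos i).le) hsum fun i _ =>
      (isMonotone_inv_sub_one_iff (hJunit i)).mp (by rw [hJinv]; exact hmono i)
  refine ⟨fun i => det_eq_one_of_transpose_mul_self_eq_one (horth i) (hunit i), hunit, hBunit,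
    hBmono, hBorth, det_eq_one_of_transpose_mul_self_eq_one hBorth ?_⟩
  rwa [sub_add_cancel, isUnit_nonsing_inv_iff]

/-- If each `Aᵢ` is a monotone orthogonal real `N × N` matrix, then `det Aᵢ = 1`,
`Aᵢ + I` is invertible, `Σᵢ λᵢ(Aᵢ + I)⁻¹` is invertible, and the resolvent
average `R(A, λ) = (Σᵢ λᵢ(Aᵢ + I)⁻¹)⁻¹ − I` is monotone and orthogonal with
determinant `1`. -/
theorem stmt19 {N n : ℕ} (hn : 0 < n) (lam : Fin n → ℝ) (hpos : ∀ i, 0 < lam i)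
    (hsum : ∑ i, lam i = 1) (A : Fin n → Matrix (Fin N) (Fin N) ℝ)
    (hmono : ∀ i, ∀ x : Fin N → ℝ, 0 ≤ x ⬝ᵥ (A i).mulVec x)
    (horth : ∀ i, (A i)ᵀ * A i = 1) :
    (∀ i, (A i).det = 1) ∧
    (∀ i, IsUnit (A i + 1)) ∧
    IsUnit (∑ i, lam i • (A i + 1)⁻¹) ∧
    (∀ x : Fin N → ℝ,
      0 ≤ x ⬝ᵥ ((∑ i, lam i • (A i + 1)⁻¹)⁻¹ - 1).mulVec x) ∧
    ((∑ i, lam i • (A i + 1)⁻¹)⁻¹ - 1)ᵀ * ((∑ i, lam i • (A i + 1)⁻¹)⁻¹ - 1) = 1 ∧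
    ((∑ i, lam i • (A i + 1)⁻¹)⁻¹ - 1).det = 1 :=
  stmt19_general lam hpos hsum A hmono horth
end
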